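/- arXiv:2204.08295 — 4 statements merged into one kernel-verified Lean document; each statement's English description precedes it below -/
import Mathlib

section
/- For every positive multiple n of 16, the support of the Fourier transform 𝓕b_n is contained in the annulus {ξ ∈ ℝ^d : (33/24)·2^n ≤ |ξ| ≤ (35/24)·2^n}. -/
open MeasureTheory Finset

noncomputable section

/-- The `i`-th coordinate (0-based) of a point of `ℝ^d`, or `0` if `i ≥ d`. -/
def coord (d i : ℕ) (x : EuclideanSpace ℝ (Fin d)) : ℝ :=
  if h : i < d then x ⟨i, h⟩ else 0

/-- The diagonal matrix `A = diag(ε, ε, 1, …, 1)` applied to a vector. -/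
def Amap (d : ℕ) (ε : ℝ) (x : EuclideanSpace ℝ (Fin d)) : EuclideanSpace ℝ (Fin d) :=
  WithLp.toLp 2 fun i => (if (i : ℕ) < 2 then ε else 1) * x i

/-- The unit vector `e = (√2/2)(1,1,0,…,0)`. -/
def evec (d : ℕ) : EuclideanSpace ℝ (Fin d) :=
  WithLp.toLp 2 fun i => if (i : ℕ) < 2 then Real.sqrt 2 / 2 else 0

/-- `N(n) = {k : k positive multiple of 8, n/4 ≤ k ≤ n/2}`. -/
def Nset (n : ℕ) : Finset ℕ :=
  (Finset.range (n + 1)).filter fun k => 0 < k ∧ 8 ∣ k ∧ n ≤ 4 * k ∧ 2 * k ≤ n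

/-- Fourier transform on `ℝ^d` with the convention `𝓕f(ξ) = ∫ e^{-i x·ξ} f(x) dx`. -/
def FT (d : ℕ) (f : EuclideanSpace ℝ (Fin d) → ℂ) (ξ : EuclideanSpace ℝ (Fin d)) : ℂ :=
  ∫ x : EuclideanSpace ℝ (Fin d), Complex.exp (-(Complex.I * ((inner ℝ x ξ : ℝ) : ℂ))) * f x

/-- Inverse Fourier transform `𝓕⁻¹g(x) = (2π)^{-d} ∫ e^{i x·ξ} g(ξ) dξ`. -/
def FTinv (d : ℕ) (g : EuclideanSpace ℝ (Fin d) → ℂ) (x : EuclideanSpace ℝ (Fin d)) : ℂ :=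
  (((2 * Real.pi) ^ d : ℝ) : ℂ)⁻¹ *
    ∫ ξ : EuclideanSpace ℝ (Fin d), Complex.exp (Complex.I * ((inner ℝ x ξ : ℝ) : ℂ)) * g ξ

/-- One-dimensional Fourier transform with the convention `𝓕f(ξ) = ∫ e^{-i x ξ} f(x) dx`. -/
def FT1 (f : ℝ → ℂ) (ξ : ℝ) : ℂ :=
  ∫ x : ℝ, Complex.exp (-(Complex.I * (x * ξ : ℝ))) * f x

/-- `φ(x) = θ(x₁)⋯θ(x_d) sin((17/24) x_d)`. -/
def phi (d : ℕ) (θ : ℝ → ℝ) (x : EuclideanSpace ℝ (Fin d)) : ℝ :=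
  (∏ i, θ (x i)) * Real.sin (17 / 24 * coord d (d - 1) x)

/-- `b_n(x) = n^{-1/(2q)} Σ_{k ∈ N(n)} 2^k φ(2^k A(x - 2^{2n+k} e)) sin((17/12) 2^n (e·x))`. -/
def bfun (d : ℕ) (q ε : ℝ) (θ : ℝ → ℝ) (n : ℕ) (x : EuclideanSpace ℝ (Fin d)) : ℝ :=
  (n : ℝ) ^ (-(1 / (2 * q))) *
    ∑ k ∈ Nset n,
      (2 : ℝ) ^ k * phi d θ ((2 : ℝ) ^ k • Amap d ε (x - (2 : ℝ) ^ (2 * n + k) • evec d)) *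
        Real.sin (17 / 12 * 2 ^ n * (inner ℝ (evec d) x : ℝ))

/-- `c_n = 𝓕⁻¹[((ξ₂ - ξ₁)/ξ₂) 𝓕b_n]`. -/
def cfun (d : ℕ) (q ε : ℝ) (θ : ℝ → ℝ) (n : ℕ) (x : EuclideanSpace ℝ (Fin d)) : ℂ :=
  FTinv d (fun ξ => (((coord d 1 ξ - coord d 0 ξ) / coord d 1 ξ : ℝ) : ℂ) *
    FT d (fun y => (bfun d q ε θ n y : ℂ)) ξ) x

/-- The Littlewood–Paley cutoff `φ_LP(ξ) = χ(ξ/2) - χ(ξ)`. -/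
def phiLP (d : ℕ) (χ : EuclideanSpace ℝ (Fin d) → ℝ) (ξ : EuclideanSpace ℝ (Fin d)) : ℝ :=
  χ ((2 : ℝ)⁻¹ • ξ) - χ ξ

/-- The Littlewood–Paley block `Δ_j f = 𝓕⁻¹(φ_LP(2^{-j}·) 𝓕f)`. -/
def LPblock (d : ℕ) (χ : EuclideanSpace ℝ (Fin d) → ℝ) (j : ℤ)
    (f : EuclideanSpace ℝ (Fin d) → ℂ) (x : EuclideanSpace ℝ (Fin d)) : ℂ :=
  FTinv d (fun ξ => (phiLP d χ ((2 : ℝ) ^ (-j) • ξ) : ℂ) * FT d f ξ) x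

/-- Partial derivative `∂_{x_{i+1}} f` (0-based index `i`) of a complex-valued function. -/
def pderivC (d i : ℕ) (f : EuclideanSpace ℝ (Fin d) → ℂ) (x : EuclideanSpace ℝ (Fin d)) : ℂ :=
  if h : i < d then fderiv ℝ f x (EuclideanSpace.single ⟨i, h⟩ 1) else 0

/-- Partial derivative `∂_{x_{i+1}} f` (0-based index `i`) of a real-valued function. -/
def pderivR (d i : ℕ) (f : EuclideanSpace ℝ (Fin d) → ℝ) (x : EuclideanSpace ℝ (Fin d)) : ℝ :=
  if h : i < d then fderiv ℝ f x (EuclideanSpace.single ⟨i, h⟩ 1) else 0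

end

noncomputable section Aux

lemma normExpAux (r : ℝ) : ‖Complex.exp (-(Complex.I * (r:ℂ)))‖ = 1 := by
  simp [Complex.norm_exp]

lemma intThetaAff (θ : SchwartzMap ℝ ℝ) {a : ℝ} (ha : a ≠ 0) (c : ℝ) :
    Integrable (fun t : ℝ => ((θ (a*(t-c)) : ℝ) : ℂ)) := by
  have h1 : Integrable (fun t : ℝ => ((θ t : ℝ) : ℂ)) := (θ.integrable (μ := volume)).ofReal
  exact (h1.comp_mul_left' ha).comp_sub_right c

def Pf (θ : SchwartzMap ℝ ℝ) (ξ a c : ℝ) (t : ℝ) : ℂ :=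
  Complex.exp (-(Complex.I * ((t * ξ : ℝ):ℂ))) * ((θ (a*(t-c)) : ℝ) : ℂ)

lemma integrable_Pf (θ : SchwartzMap ℝ ℝ) {a : ℝ} (ha : a ≠ 0) (ξ c : ℝ) :
    Integrable (Pf θ ξ a c) := by
  apply (intThetaAff θ ha c).bdd_mul (c := 1)
  · apply Continuous.aestronglyMeasurable
    fun_prop
  · exact Filter.Eventually.of_forall (fun t => le_of_eq (normExpAux _))

lemma integral_Pf (θ : SchwartzMap ℝ ℝ) {a : ℝ} (ha : a ≠ 0) (ξ c : ℝ) :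
    ∫ t : ℝ, Pf θ ξ a c t
      = |a|⁻¹ • (Complex.exp (-(Complex.I * ((c*ξ : ℝ):ℂ))) *
          FT1 (fun x => ((θ x : ℝ):ℂ)) (ξ/a)) := by
  set G : ℝ → ℂ := fun y =>
    Complex.exp (-(Complex.I * (((y/a + c) * ξ : ℝ):ℂ))) * ((θ y : ℝ):ℂ) with hG
  have hPG : ∀ t, Pf θ ξ a c t = G (a*(t-c)) := by
    intro t
    have h : a*(t-c)/a + c = t := by field_simp; ring
    simp only [Pf, hG, h]
  have step1 : ∫ t : ℝ, Pf θ ξ a c t = ∫ t : ℝ, (fun s => G (a*s)) (t - c) := by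
    simp only [hPG]
  rw [step1, integral_sub_right_eq_self (fun s => G (a*s)) c,
    MeasureTheory.Measure.integral_comp_mul_left G a]
  have hGsplit : ∀ y : ℝ, G y = Complex.exp (-(Complex.I * ((c*ξ : ℝ):ℂ))) *
      (Complex.exp (-(Complex.I * ((y * (ξ/a) : ℝ):ℂ))) * ((θ y : ℝ):ℂ)) := by
    intro y
    have harg : ((y/a + c) * ξ : ℝ) = c*ξ + y*(ξ/a) := by
      field_simp
      ring
    have hexp : Complex.exp (-(Complex.I * ((c*ξ + y*(ξ/a) : ℝ):ℂ)))
        = Complex.exp (-(Complex.I * ((c*ξ : ℝ):ℂ))) *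
          Complex.exp (-(Complex.I * ((y*(ξ/a) : ℝ):ℂ))) := by
      rw [← Complex.exp_add]
      congr 1
      push_cast
      ring
    rw [hG]
    simp only [harg, hexp, mul_assoc]
  simp only [hGsplit]
  rw [MeasureTheory.integral_const_mul, abs_inv]
  rfl

lemma expAddAux (p q : ℝ) : Complex.exp (-(Complex.I*((p+q:ℝ):ℂ)))
    = Complex.exp (-(Complex.I*(p:ℂ))) * Complex.exp (-(Complex.I*(q:ℂ))) := by
  rw [← Complex.exp_add]
  congr 1
  push_cast
  ring

lemma keyAlg (u v w Pθ c : ℝ) :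
    Complex.exp (-(Complex.I*(u:ℂ))) * ((c * (Pθ * Real.sin w) * Real.sin v : ℝ) : ℂ)
      = (c:ℂ) * ( (-1/4) * (Complex.exp (-(Complex.I*((u - v - w:ℝ):ℂ))) * (Pθ:ℂ))
                + (1/4) * (Complex.exp (-(Complex.I*((u - v + w:ℝ):ℂ))) * (Pθ:ℂ))
                + (1/4) * (Complex.exp (-(Complex.I*((u + v - w:ℝ):ℂ))) * (Pθ:ℂ))
                + (-1/4) * (Complex.exp (-(Complex.I*((u + v + w:ℝ):ℂ))) * (Pθ:ℂ)) ) := by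
  have h1 : (u - v - w : ℝ) = u + (-v) + (-w) := by ring
  have h2 : (u - v + w : ℝ) = u + (-v) + w := by ring
  have h3 : (u + v - w : ℝ) = u + v + (-w) := by ring
  rw [h1, h2, h3, expAddAux (u + (-v)) (-w), expAddAux u (-v),
    expAddAux (u + (-v)) w, expAddAux (u+v) (-w), expAddAux u v, expAddAux (u+v) w]
  push_cast
  rw [Complex.sin, Complex.sin]
  ring_nf
  rw [show Complex.exp (-(Complex.I*(u:ℂ)) + Complex.I*(v:ℂ))
      = Complex.exp (-(Complex.I*(u:ℂ))) * Complex.exp (Complex.I*(v:ℂ)) from Complex.exp_add _ _,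
    show Complex.exp (-(Complex.I*(u:ℂ)) - Complex.I*(v:ℂ))
      = Complex.exp (-(Complex.I*(u:ℂ))) * Complex.exp (-(Complex.I*(v:ℂ))) from by
        rw [sub_eq_add_neg, Complex.exp_add]]
  ring_nf
  simp only [Complex.I_sq]
  ring

lemma Texpand {d : ℕ} (θ : SchwartzMap ℝ ℝ) (ξg aa cc : Fin d → ℝ)
    (x : EuclideanSpace ℝ (Fin d)) :
    ∏ i, Pf θ (ξg i) (aa i) (cc i) (x i)
      = Complex.exp (-(Complex.I * ((∑ i, x i * ξg i : ℝ):ℂ)))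
          * ((∏ i, θ (aa i * (x i - cc i)) : ℝ):ℂ) := by
  unfold Pf
  rw [Finset.prod_mul_distrib, ← Complex.exp_sum]
  congr 1
  · congr 1
    push_cast
    rw [Finset.sum_neg_distrib, Finset.mul_sum]
  · push_cast
    rfl

lemma integrable_tensor {d : ℕ} (f : Fin d → ℝ → ℂ) (hf : ∀ i, Integrable (f i)) :
    Integrable (fun x : EuclideanSpace ℝ (Fin d) => ∏ i, f i (x i)) := by
  have h : Integrable (fun y : Fin d → ℝ => ∏ i, f i (y i)) :=
    MeasureTheory.Integrable.fintype_prod (f := fun i => f i) hf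
  have e := EuclideanSpace.volume_preserving_symm_measurableEquiv_toLp (Fin d)
  exact (e.integrable_comp_emb (MeasurableEquiv.measurableEmbedding _)).2 h

lemma integral_tensor {d : ℕ} (f : Fin d → ℝ → ℂ) :
    ∫ x : EuclideanSpace ℝ (Fin d), ∏ i, f i (x i) = ∏ i, ∫ t : ℝ, f i t := by
  rw [← MeasureTheory.integral_fintype_prod_eq_prod (ι := Fin d) (fun i => f i)]
  exact (EuclideanSpace.volume_preserving_symm_measurableEquiv_toLp (Fin d)).integral_comp'
    (fun y => ∏ i, f i (y i))

end Aux

set_option maxHeartbeats 1000000 in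
/-- For every positive multiple `n` of 16, the support of `𝓕 b_n` is contained
in the annulus `{ξ : (33/24)·2^n ≤ |ξ| ≤ (35/24)·2^n}`. -/
theorem stmt0 (d : ℕ) (hd : 4 ≤ d) (q : ℝ) (hq1 : 1 ≤ q) (hq2 : q < d / 2)
    (ε : ℝ) (hε : ε ∈ Set.Ioo (0 : ℝ) 1)
    (θ : SchwartzMap ℝ ℝ)
    (hθsm : ContDiff ℝ (⊤ : ℕ∞) fun ξ : ℝ => FT1 (fun x => (θ x : ℂ)) ξ)
    (hθ01 : ∀ ξ : ℝ, (FT1 (fun x => (θ x : ℂ)) ξ).im = 0 ∧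
      (FT1 (fun x => (θ x : ℂ)) ξ).re ∈ Set.Icc (0 : ℝ) 1)
    (hθ1 : ∀ ξ : ℝ, |ξ| ≤ 1 / (200 * d) → FT1 (fun x => (θ x : ℂ)) ξ = 1)
    (hθ0 : ∀ ξ : ℝ, 1 / (100 * d) ≤ |ξ| → FT1 (fun x => (θ x : ℂ)) ξ = 0)
    (n : ℕ) (hn : 0 < n) (h16 : 16 ∣ n) :
    Function.support (FT d fun x => (bfun d q ε (fun t => θ t) n x : ℂ)) ⊆
      {ξ : EuclideanSpace ℝ (Fin d) |
        33 / 24 * 2 ^ n ≤ ‖ξ‖ ∧ ‖ξ‖ ≤ 35 / 24 * 2 ^ n} := by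
  classical
  intro ξ hξ
  rw [Function.mem_support] at hξ
  by_contra hmem
  apply hξ
  have hd1 : d - 1 < d := by omega
  have hd2 : ¬ ((d - 1 : ℕ) < 2) := by omega
  obtain ⟨hε0, hε1⟩ := hε
  have hn16 : 16 ≤ n := Nat.le_of_dvd hn h16
  set lastIdx : Fin d := ⟨d-1, hd1⟩ with hlastIdx
  set aa : ℕ → Fin d → ℝ := fun k i => 2^k * (if (i:ℕ) < 2 then ε else 1) with haa
  set cc : ℕ → Fin d → ℝ := fun k i => 2^(2*n+k) * evec d i with hcc
  set gam : ℝ → ℝ → ℕ → Fin d → ℝ := fun σ σ' k i =>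
    σ * (17/12*2^n) * evec d i + σ' * (17/24*2^k) * (if i = lastIdx then 1 else 0) with hgam
  set TT : ℝ → ℝ → ℕ → EuclideanSpace ℝ (Fin d) → ℂ := fun σ σ' k x =>
    ∏ i, Pf θ (ξ i - gam σ σ' k i) (aa k i) (cc k i) (x i) with hTT
  have haapos : ∀ k i, 0 < aa k i := by
    intro k i
    rw [haa]
    have : (0:ℝ) < 2^k := by positivity
    by_cases h : (i:ℕ) < 2 <;> simp [h] <;> positivity
  have haane : ∀ k i, aa k i ≠ 0 := fun k i => (haapos k i).ne'
  have haale : ∀ k i, aa k i ≤ 2^k := by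
    intro k i
    rw [haa]
    have h2 : (0:ℝ) < 2^k := by positivity
    by_cases h : (i:ℕ) < 2 <;> simp [h]
    nlinarith
  have hTint : ∀ σ σ' k, MeasureTheory.Integrable (TT σ σ' k) := by
    intro σ σ' k
    rw [hTT]
    exact integrable_tensor _ (fun i => integrable_Pf θ (haane k i) _ _)
  -- membership facts for k ∈ Nset n
  have hkfacts : ∀ k ∈ Nset n, 8 ≤ k ∧ 2*k ≤ n := by
    intro k hk
    simp only [Nset, Finset.mem_filter, Finset.mem_range] at hk
    obtain ⟨-, hpos, hdvd, -, h2k⟩ := hk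
    exact ⟨Nat.le_of_dvd hpos hdvd, h2k⟩
  have h2kle : ∀ k ∈ Nset n, (2:ℝ)^k * 24 ≤ 2^n := by
    intro k hk
    obtain ⟨h8, h2k⟩ := hkfacts k hk
    have hkn : k + 5 ≤ n := by omega
    have : (2:ℝ)^(k+5) ≤ 2^n := by
      apply pow_le_pow_right₀ one_le_two hkn
    rw [pow_add] at this
    nlinarith [pow_pos (by norm_num : (0:ℝ) < 2) k]
  -- norm of evec
  have henorm : ‖evec d‖ = 1 := by
    have h0 : (0:ℕ) < d := by omega
    have h1 : (1:ℕ) < d := by omega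
    have hfilt : (univ.filter fun i : Fin d => (i:ℕ) < 2)
        = {(⟨0, h0⟩ : Fin d), ⟨1, h1⟩} := by
      ext i
      simp only [Finset.mem_filter, Finset.mem_univ, true_and, Finset.mem_insert,
        Finset.mem_singleton]
      constructor
      · intro h
        interval_cases h' : (i:ℕ)
        · left; exact Fin.ext h'
        · right; exact Fin.ext h'
      · rintro (rfl | rfl) <;> simp
    have hsum : ∑ i : Fin d, ‖evec d i‖^2 = 1 := by
      have hterm : ∀ i : Fin d, ‖evec d i‖^2 = if (i:ℕ) < 2 then (1:ℝ)/2 else 0 := by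
        intro i
        by_cases h : (i:ℕ) < 2 <;> simp [evec, h]
        rw [if_pos (by omega), div_pow, Real.sq_sqrt (by norm_num : (0:ℝ) ≤ 2)]
        norm_num
        omega
      simp only [hterm]
      rw [Finset.sum_ite, Finset.sum_const, Finset.sum_const, hfilt]
      have hne : ¬ ((⟨0, h0⟩ : Fin d) = ⟨1, h1⟩) := by
        simp [Fin.ext_iff]
      rw [Finset.card_insert_of_notMem (by simp [hne]), Finset.card_singleton]
      norm_num
    rw [EuclideanSpace.norm_eq]
    simp only [hsum]
    exact Real.sqrt_one
  -- the geometric claim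
  have hbad : ∀ k ∈ Nset n, ∀ σ σ' : ℝ, |σ| = 1 → |σ'| = 1 →
      ∃ i, 1/(100*(d:ℝ)) ≤ |(ξ i - gam σ σ' k i) / aa k i| := by
    intro k hk σ σ' hσ hσ'
    by_contra hcon
    push_neg at hcon
    apply hmem
    obtain ⟨h8, h2kn⟩ := hkfacts k hk
    have h24 := h2kle k hk
    have hd4 : (4:ℝ) ≤ (d:ℝ) := by exact_mod_cast hd
    have ht : (0:ℝ) < 2^k := by positivity
    have htn : (0:ℝ) < 2^n := by positivity
    set D : ℝ := 1/(100*(d:ℝ)) with hD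
    have hDpos : 0 < D := by rw [hD]; positivity
    have hDle : D ≤ 1/400 := by
      rw [hD]
      rw [div_le_div_iff₀ (by positivity) (by norm_num)]
      linarith
    have hdD : (d:ℝ) * D = 1/100 := by
      rw [hD]
      field_simp
    have hsmall : ∀ i, |ξ i - gam σ σ' k i| ≤ 2^k * D := by
      intro i
      have h := hcon i
      rw [abs_div, abs_of_pos (haapos k i), div_lt_iff₀ (haapos k i)] at h
      calc |ξ i - gam σ σ' k i| ≤ D * aa k i := (le_of_lt h)
        _ ≤ D * 2^k := by
            exact mul_le_mul_of_nonneg_left (haale k i) hDpos.le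
        _ = 2^k * D := by ring
    set v : EuclideanSpace ℝ (Fin d) := (σ * (17/12*2^n)) • evec d with hv
    have hgd : ∀ i, ξ i - v i
        = (ξ i - gam σ σ' k i) + σ'*(17/24*2^k)*(if i = lastIdx then 1 else 0) := by
      intro i
      have hvi : v i = σ * (17/12*2^n) * evec d i := by
        rw [hv]
        simp [PiLp.smul_apply, smul_eq_mul]
      rw [hvi, hgam]
      ring
    have hbound : ∀ i : Fin d, ‖(ξ - v) i‖^2
        ≤ (if i = lastIdx then (2^k*D + 17/24*2^k)^2 else (2^k*D)^2) := by
      intro i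
      have happ : (ξ - v) i = ξ i - v i := by simp [PiLp.sub_apply]
      have h1 : |ξ i - v i| ≤ 2^k*D + (if i = lastIdx then 17/24*2^k else 0) := by
        rw [hgd i]
        refine (abs_add_le _ _).trans ?_
        gcongr
        · exact hsmall i
        · by_cases h : i = lastIdx
          · simp only [h, if_true]
            rw [mul_one, abs_mul, abs_mul, hσ', one_mul, abs_of_pos (by positivity : (0:ℝ) < 17/24), abs_of_pos ht]
          · simp [h]
      rw [happ, Real.norm_eq_abs]
      by_cases h : i = lastIdx <;> simp only [h, if_true, if_false] <;>
      · simp only [h, if_true, if_false] at h1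
        try rw [add_zero] at h1
        have h2 : (0:ℝ) ≤ 2^k*D + 17/24*2^k := by positivity
        have h3 : (0:ℝ) ≤ 2^k*D := by positivity
        nlinarith [abs_nonneg (ξ i - v i), abs_nonneg (ξ lastIdx - v lastIdx)]
    have hsum_le : ∑ i : Fin d, ‖(ξ - v) i‖^2 ≤ ((2:ℝ)^k)^2 := by
      have step : ∑ i : Fin d, ‖(ξ - v) i‖^2
          ≤ ∑ i : Fin d, (if i = lastIdx then (2^k*D + 17/24*2^k)^2 else (2^k*D)^2) :=
        Finset.sum_le_sum (fun i _ => hbound i)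
      refine step.trans ?_
      have hsplit : ∀ i : Fin d, (if i = lastIdx then (2^k*D + 17/24*2^k)^2 else (2^k*D)^2)
          = (2^k*D)^2 + (if i = lastIdx then (2^k*D + 17/24*2^k)^2 - (2^k*D)^2 else 0) := by
        intro i
        by_cases h : i = lastIdx <;> simp [h]
      simp only [hsplit]
      rw [Finset.sum_add_distrib, Finset.sum_const, Finset.sum_ite_eq' Finset.univ lastIdx
        (fun _ => (2^k*D + 17/24*2^k)^2 - (2^k*D)^2)]
      simp only [Finset.card_univ, Fintype.card_fin, Finset.mem_univ, if_true, nsmul_eq_mul]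
      have hdC : (d:ℝ) * (2^k*D)^2 = (2^k)^2*D*(1/100) := by
        have : (d:ℝ) * (2^k*D)^2 = (2^k)^2*D*((d:ℝ)*D) := by ring
        rw [this, hdD]
      rw [hdC]
      nlinarith [sq_nonneg ((2:ℝ)^k), hDpos.le, hDle, ht.le]
    have hnormle : ‖ξ - v‖ ≤ 2^k := by
      rw [EuclideanSpace.norm_eq]
      calc Real.sqrt (∑ i, ‖(ξ - v) i‖^2) ≤ Real.sqrt (((2:ℝ)^k)^2) :=
        Real.sqrt_le_sqrt hsum_le
        _ = 2^k := Real.sqrt_sq ht.le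
    have hnv : ‖v‖ = 17/12*2^n := by
      rw [hv, norm_smul, henorm, Real.norm_eq_abs, abs_mul, hσ, one_mul, mul_one,
        abs_of_pos (by positivity)]
    have htri := abs_norm_sub_norm_le ξ v
    rw [abs_le] at htri
    obtain ⟨htri1, htri2⟩ := htri
    simp only [Set.mem_setOf_eq]
    constructor
    · nlinarith
    · nlinarith
  -- vanishing of each tensor integral
  have hzero : ∀ k ∈ Nset n, ∀ σ σ' : ℝ, |σ| = 1 → |σ'| = 1 →
      ∫ x : EuclideanSpace ℝ (Fin d), TT σ σ' k x = 0 := by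
    intro k hk σ σ' hσ hσ'
    obtain ⟨i0, hi0⟩ := hbad k hk σ σ' hσ hσ'
    rw [hTT]
    rw [integral_tensor (fun i => Pf θ (ξ i - gam σ σ' k i) (aa k i) (cc k i))]
    apply Finset.prod_eq_zero (Finset.mem_univ i0)
    rw [integral_Pf θ (haane k i0)]
    rw [hθ0 _ hi0]
    simp
  -- the key pointwise identity
  have hkey : ∀ k, ∀ x : EuclideanSpace ℝ (Fin d),
      Complex.exp (-(Complex.I * ((inner ℝ x ξ : ℝ):ℂ))) *
        (((2:ℝ)^k * phi d (fun t => θ t) ((2:ℝ)^k • Amap d ε (x - (2:ℝ)^(2*n+k) • evec d)) *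
          Real.sin (17/12*2^n * (inner ℝ (evec d) x : ℝ)) : ℝ) : ℂ)
      = ((2:ℝ)^k : ℂ) * ((-1/4) * TT 1 1 k x + (1/4) * TT 1 (-1) k x
          + (1/4) * TT (-1) 1 k x + (-1/4) * TT (-1) (-1) k x) := by
    intro k x
    set u : ℝ := (inner ℝ x ξ : ℝ) with hu
    set vv : ℝ := 17/12*2^n * (inner ℝ (evec d) x : ℝ) with hvv
    set w : ℝ := 17/24*(2^k * x lastIdx) with hw
    set Pθ : ℝ := ∏ i, θ (aa k i * (x i - cc k i)) with hPθ
    have hy : ∀ i, ((2:ℝ)^k • Amap d ε (x - (2:ℝ)^(2*n+k) • evec d)) i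
        = aa k i * (x i - cc k i) := by
      intro i
      simp only [PiLp.smul_apply, PiLp.sub_apply, smul_eq_mul, Amap, haa, hcc]
      ring
    have hcoord : coord d (d-1) ((2:ℝ)^k • Amap d ε (x - (2:ℝ)^(2*n+k) • evec d))
        = 2^k * x lastIdx := by
      simp only [coord, dif_pos hd1]
      rw [hy ⟨d-1, hd1⟩]
      have ha1 : aa k (⟨d-1, hd1⟩ : Fin d) = 2^k := by
        simp [haa, hd2]; intro h; exact absurd h (by omega)
      have hc0 : cc k (⟨d-1, hd1⟩ : Fin d) = 0 := by
        simp [hcc, evec, hd2]; omega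
      rw [ha1, hc0, sub_zero, hlastIdx]
    have hphi : phi d (fun t => θ t) ((2:ℝ)^k • Amap d ε (x - (2:ℝ)^(2*n+k) • evec d))
        = Pθ * Real.sin w := by
      simp only [phi, hcoord, hPθ, hw]
      congr 1
      exact Finset.prod_congr rfl (fun i _ => by rw [hy i])
    have hu_sum : u = ∑ i, x i * ξ i := by
      rw [hu]
      simp [PiLp.inner_apply, RCLike.inner_apply, conj_trivial]
      exact Finset.sum_congr rfl (fun i _ => mul_comm _ _)
    have hv_sum : (inner ℝ (evec d) x : ℝ) = ∑ i, evec d i * x i := by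
      simp [PiLp.inner_apply, RCLike.inner_apply, conj_trivial]
      exact Finset.sum_congr rfl (fun i _ => mul_comm _ _)
    have hgam_sum : ∀ σ σ' : ℝ, ∑ i, x i * gam σ σ' k i = σ * vv + σ' * w := by
      intro σ σ'
      have hterm : ∀ i, x i * gam σ σ' k i
          = σ * (17/12*2^n) * (evec d i * x i)
            + (if i = lastIdx then σ' * (17/24*2^k) * x i else 0) := by
        intro i
        rw [hgam]
        by_cases h : i = lastIdx <;> simp [h] <;> ring
      rw [Finset.sum_congr rfl (fun i _ => hterm i), Finset.sum_add_distrib,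
        Finset.sum_ite_eq' Finset.univ lastIdx (fun i => σ' * (17/24*2^k) * x i),
        ← Finset.mul_sum]
      simp only [Finset.mem_univ, if_true]
      rw [hvv, hw, hv_sum]
      ring
    have hTeq : ∀ σ σ' : ℝ, TT σ σ' k x
        = Complex.exp (-(Complex.I * ((u - (σ * vv + σ' * w) : ℝ):ℂ))) * (Pθ:ℂ) := by
      intro σ σ'
      simp only [hTT]
      rw [Texpand θ (fun i => ξ i - gam σ σ' k i) (aa k) (cc k) x]
      have harg : ∑ i, x i * (ξ i - gam σ σ' k i) = u - (σ * vv + σ' * w) := by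
        rw [← hgam_sum σ σ', hu_sum, ← Finset.sum_sub_distrib]
        exact Finset.sum_congr rfl (fun i _ => by ring)
      rw [harg, hPθ]
    have e11 : TT 1 1 k x
        = Complex.exp (-(Complex.I * ((u - vv - w : ℝ):ℂ))) * (Pθ:ℂ) := by
      rw [hTeq 1 1, show (u - (1 * vv + 1 * w) : ℝ) = u - vv - w by ring]
    have e12 : TT 1 (-1) k x
        = Complex.exp (-(Complex.I * ((u - vv + w : ℝ):ℂ))) * (Pθ:ℂ) := by
      rw [hTeq 1 (-1), show (u - (1 * vv + (-1) * w) : ℝ) = u - vv + w by ring]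
    have e21 : TT (-1) 1 k x
        = Complex.exp (-(Complex.I * ((u + vv - w : ℝ):ℂ))) * (Pθ:ℂ) := by
      rw [hTeq (-1) 1, show (u - ((-1) * vv + 1 * w) : ℝ) = u + vv - w by ring]
    have e22 : TT (-1) (-1) k x
        = Complex.exp (-(Complex.I * ((u + vv + w : ℝ):ℂ))) * (Pθ:ℂ) := by
      rw [hTeq (-1) (-1), show (u - ((-1) * vv + (-1) * w) : ℝ) = u + vv + w by ring]
    rw [hphi, e11, e12, e21, e22, keyAlg u vv w Pθ (2^k)]
    norm_cast
  -- final computation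
  set C : ℝ := (n:ℝ) ^ (-(1/(2*q))) with hC
  have integrand_eq : ∀ x : EuclideanSpace ℝ (Fin d),
      Complex.exp (-(Complex.I * ((inner ℝ x ξ : ℝ):ℂ)))
          * ((bfun d q ε (fun t => θ t) n x : ℝ):ℂ)
        = ∑ k ∈ Nset n, (C:ℂ) * (((2:ℝ)^k : ℂ) * ((-1/4) * TT 1 1 k x
            + (1/4) * TT 1 (-1) k x + (1/4) * TT (-1) 1 k x
            + (-1/4) * TT (-1) (-1) k x)) := by
    intro x
    simp only [bfun, ← hC]
    rw [Complex.ofReal_mul, Complex.ofReal_sum, mul_left_comm, Finset.mul_sum, Finset.mul_sum]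
    refine Finset.sum_congr rfl (fun k hk => ?_)
    rw [hkey k x]
  have hintegrand_int : ∀ k ∈ Nset n,
      MeasureTheory.Integrable (fun x : EuclideanSpace ℝ (Fin d) =>
        (C:ℂ) * (((2:ℝ)^k : ℂ) * ((-1/4) * TT 1 1 k x + (1/4) * TT 1 (-1) k x
          + (1/4) * TT (-1) 1 k x + (-1/4) * TT (-1) (-1) k x))) := by
    intro k hk
    apply MeasureTheory.Integrable.const_mul
    apply MeasureTheory.Integrable.const_mul
    exact ((((hTint 1 1 k).const_mul _).add ((hTint 1 (-1) k).const_mul _)).add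
      ((hTint (-1) 1 k).const_mul _)).add ((hTint (-1) (-1) k).const_mul _)
  have hfun : (fun x : EuclideanSpace ℝ (Fin d) =>
      Complex.exp (-(Complex.I * ((inner ℝ x ξ : ℝ):ℂ)))
        * ((bfun d q ε (fun t => θ t) n x : ℝ):ℂ))
      = fun x => ∑ k ∈ Nset n, (C:ℂ) * (((2:ℝ)^k : ℂ) * ((-1/4) * TT 1 1 k x
          + (1/4) * TT 1 (-1) k x + (1/4) * TT (-1) 1 k x
          + (-1/4) * TT (-1) (-1) k x)) := funext integrand_eq
  show FT d (fun x => ((bfun d q ε (fun t => θ t) n x : ℝ):ℂ)) ξ = 0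
  unfold FT
  rw [hfun, MeasureTheory.integral_finset_sum _ hintegrand_int]
  apply Finset.sum_eq_zero
  intro k hk
  have z11 := hzero k hk 1 1 (by norm_num) (by norm_num)
  have z12 := hzero k hk 1 (-1) (by norm_num) (by norm_num)
  have z21 := hzero k hk (-1) 1 (by norm_num) (by norm_num)
  have z22 := hzero k hk (-1) (-1) (by norm_num) (by norm_num)
  have i11 : MeasureTheory.Integrable (fun x : EuclideanSpace ℝ (Fin d) =>
      (-1/4 : ℂ) * TT 1 1 k x) := (hTint 1 1 k).const_mul _
  have i12 : MeasureTheory.Integrable (fun x : EuclideanSpace ℝ (Fin d) =>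
      (1/4 : ℂ) * TT 1 (-1) k x) := (hTint 1 (-1) k).const_mul _
  have i21 : MeasureTheory.Integrable (fun x : EuclideanSpace ℝ (Fin d) =>
      (1/4 : ℂ) * TT (-1) 1 k x) := (hTint (-1) 1 k).const_mul _
  have i22 : MeasureTheory.Integrable (fun x : EuclideanSpace ℝ (Fin d) =>
      (-1/4 : ℂ) * TT (-1) (-1) k x) := (hTint (-1) (-1) k).const_mul _
  have iA : MeasureTheory.Integrable (fun x : EuclideanSpace ℝ (Fin d) =>
      (-1/4 : ℂ) * TT 1 1 k x + (1/4 : ℂ) * TT 1 (-1) k x) := i11.add i12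
  have iB : MeasureTheory.Integrable (fun x : EuclideanSpace ℝ (Fin d) =>
      (-1/4 : ℂ) * TT 1 1 k x + (1/4 : ℂ) * TT 1 (-1) k x
        + (1/4 : ℂ) * TT (-1) 1 k x) := iA.add i21
  rw [MeasureTheory.integral_const_mul, MeasureTheory.integral_const_mul,
    MeasureTheory.integral_add iB i22, MeasureTheory.integral_add iA i21,
    MeasureTheory.integral_add i11 i12,
    MeasureTheory.integral_const_mul, MeasureTheory.integral_const_mul,
    MeasureTheory.integral_const_mul, MeasureTheory.integral_const_mul,
    z11, z12, z21, z22]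
  simp
end

section
/- Let M ≥ 100d be an integer. There exists a constant C > 0, depending only on d and M, such that for every positive multiple n of 16 and all ℓ₁, ℓ₂ ∈ N(n) with ℓ₁ < ℓ₂, one has ∫_{ℝ^d} (1 + 2^{ℓ₁}|A(x + 2^{2n+ℓ₁} e)|)^{−M} (1 + 2^{ℓ₂}|A(x + 2^{2n+ℓ₂} e)|)^{−M} dx ≤ C ε^{−2} [ (ε 2^{ℓ₁} 2^{2n})^{−M} 2^{−d ℓ₂} + (ε 2^{ℓ₂} 2^{2n})^{−M} 2^{−d ℓ₁} ]. -/
open MeasureTheory Finset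

noncomputable section Aux3

open MeasureTheory Module

/-- Diagonal linear map on Euclidean space. -/
def diagLM (d : ℕ) (a : Fin d → ℝ) :
    EuclideanSpace ℝ (Fin d) →ₗ[ℝ] EuclideanSpace ℝ (Fin d) where
  toFun x := WithLp.toLp 2 fun i => a i * x i
  map_add' x y := PiLp.ext fun i => by
    simp only [PiLp.add_apply, PiLp.toLp_apply]
    ring
  map_smul' c x := PiLp.ext fun i => by
    simp only [PiLp.smul_apply, PiLp.toLp_apply, smul_eq_mul, RingHom.id_apply]
    ring

lemma diagLM_apply (d : ℕ) (a : Fin d → ℝ) (x : EuclideanSpace ℝ (Fin d)) (i : Fin d) :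
    diagLM d a x i = a i * x i := rfl

lemma diagLM_det (d : ℕ) (a : Fin d → ℝ) : LinearMap.det (diagLM d a) = ∏ i, a i := by
  rw [← LinearMap.det_toMatrix (PiLp.basisFun 2 ℝ (Fin d))]
  have h : LinearMap.toMatrix (PiLp.basisFun 2 ℝ (Fin d)) (PiLp.basisFun 2 ℝ (Fin d))
      (diagLM d a) = Matrix.diagonal a := by
    ext i j
    rw [LinearMap.toMatrix_apply, PiLp.basisFun_repr, Matrix.diagonal_apply]
    rw [show (diagLM d a) ((PiLp.basisFun 2 ℝ (Fin d)) j) i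
        = a i * ((PiLp.basisFun 2 ℝ (Fin d)) j) i from rfl]
    rw [PiLp.basisFun_apply, PiLp.single_apply]
    split_ifs with h1
    · simp
    · simp
  rw [h, Matrix.det_diagonal]

lemma card_filter_lt_two (d : ℕ) (hd : 2 ≤ d) :
    (Finset.univ.filter fun i : Fin d => (i : ℕ) < 2).card = 2 := by
  have h : (Finset.univ.filter fun i : Fin d => (i : ℕ) < 2)
      = {⟨0, by omega⟩, ⟨1, by omega⟩} := by
    ext i
    simp only [Finset.mem_filter, Finset.mem_univ, true_and, Finset.mem_insert,
      Finset.mem_singleton, Fin.ext_iff]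
    omega
  rw [h]
  rw [Finset.card_pair (by simp [Fin.ext_iff])]

lemma norm_evec (d : ℕ) (hd : 2 ≤ d) : ‖evec d‖ = 1 := by
  rw [EuclideanSpace.norm_eq]
  have h : ∀ i : Fin d, ‖evec d i‖ ^ 2 = if (i : ℕ) < 2 then 1/2 else 0 := by
    intro i
    rw [Real.norm_eq_abs, sq_abs,
      show evec d i = if (i : ℕ) < 2 then Real.sqrt 2 / 2 else 0 from rfl]
    split_ifs
    · rw [div_pow, Real.sq_sqrt (by norm_num : (0:ℝ) ≤ 2)]
      norm_num
    · norm_num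
  simp_rw [h]
  rw [Finset.sum_ite, Finset.sum_const, Finset.sum_const, card_filter_lt_two d hd]
  norm_num

lemma Amap_add (d : ℕ) (ε : ℝ) (x y : EuclideanSpace ℝ (Fin d)) :
    Amap d ε (x + y) = Amap d ε x + Amap d ε y := PiLp.ext fun i => by
  show (if (i : ℕ) < 2 then ε else 1) * (x + y) i = _
  simp only [PiLp.add_apply]
  show _ = (if (i : ℕ) < 2 then ε else 1) * x i + (if (i : ℕ) < 2 then ε else 1) * y i
  ring

lemma Amap_smul (d : ℕ) (ε c : ℝ) (x : EuclideanSpace ℝ (Fin d)) :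
    Amap d ε (c • x) = c • Amap d ε x := PiLp.ext fun i => by
  show (if (i : ℕ) < 2 then ε else 1) * (c • x) i = (c • Amap d ε x) i
  simp only [PiLp.smul_apply, smul_eq_mul]
  show _ = c * ((if (i : ℕ) < 2 then ε else 1) * x i)
  ring

lemma Amap_evec (d : ℕ) (ε : ℝ) : Amap d ε (evec d) = ε • evec d := PiLp.ext fun i => by
  show (if (i : ℕ) < 2 then ε else 1) * evec d i = (ε • evec d) i
  simp only [PiLp.smul_apply, smul_eq_mul]
  rw [show evec d i = if (i : ℕ) < 2 then Real.sqrt 2 / 2 else 0 from rfl]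
  split_ifs <;> ring

lemma integrable_inv_one_add_norm_pow (d M : ℕ) (hdM : d < M) :
    Integrable (fun y : EuclideanSpace ℝ (Fin d) => ((1 + ‖y‖) ^ M)⁻¹) := by
  have h := integrable_one_add_norm (E := EuclideanSpace ℝ (Fin d)) (μ := volume)
    (r := (M : ℝ)) (by rw [finrank_euclideanSpace_fin]; exact_mod_cast hdM)
  convert h using 2 with y
  rw [Real.rpow_neg (by positivity), Real.rpow_natCast]

/-- Change of variables and integrability for the weight functions. -/
lemma integral_weight (d M : ℕ) (hd : 2 ≤ d) (hdM : d < M) (ε r : ℝ) (hε : 0 < ε) (hr : 0 < r)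
    (v : EuclideanSpace ℝ (Fin d)) :
    (∫ x : EuclideanSpace ℝ (Fin d), ((1 + r * ‖Amap d ε (x + v)‖) ^ M)⁻¹)
      = (r ^ d * ε ^ 2)⁻¹ * ∫ y : EuclideanSpace ℝ (Fin d), ((1 + ‖y‖) ^ M)⁻¹
    ∧ Integrable (fun x : EuclideanSpace ℝ (Fin d) =>
        ((1 + r * ‖Amap d ε (x + v)‖) ^ M)⁻¹) := by
  classical
  set a : Fin d → ℝ := fun i => r * (if (i : ℕ) < 2 then ε else 1) with ha_def
  have hprod : ∏ i, a i = r ^ d * ε ^ 2 := by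
    rw [ha_def]
    rw [Finset.prod_mul_distrib, Finset.prod_const, Finset.card_univ, Fintype.card_fin]
    congr 1
    rw [Finset.prod_ite, Finset.prod_const, Finset.prod_const, card_filter_lt_two d hd]
    simp
  have hdet : LinearMap.det (diagLM d a) = r ^ d * ε ^ 2 := by rw [diagLM_det, hprod]
  have hdetpos : 0 < r ^ d * ε ^ 2 := by positivity
  have hdet0 : LinearMap.det (diagLM d a) ≠ 0 := by rw [hdet]; exact ne_of_gt hdetpos
  have hcomp : ∀ y : EuclideanSpace ℝ (Fin d), r * ‖Amap d ε y‖ = ‖diagLM d a y‖ := by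
    intro y
    have h : diagLM d a y = r • (Amap d ε y) := PiLp.ext fun i => by
      rw [diagLM_apply]
      show a i * y i = (r • Amap d ε y) i
      simp only [PiLp.smul_apply, smul_eq_mul]
      show a i * y i = r * ((if (i : ℕ) < 2 then ε else 1) * y i)
      rw [ha_def]; ring
    rw [h, norm_smul, Real.norm_eq_abs, abs_of_pos hr]
  set g : EuclideanSpace ℝ (Fin d) → ℝ := fun y => ((1 + ‖y‖) ^ M)⁻¹ with hg_def
  have hg_cont : Continuous g := by
    apply Continuous.inv₀
    · exact (continuous_const.add continuous_norm).pow M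
    · intro y
      positivity
  have hg_int : Integrable g := integrable_inv_one_add_norm_pow d M hdM
  have hmeas : Measurable (diagLM d a) :=
    (LinearMap.continuous_of_finiteDimensional _).measurable
  have hmap := Measure.map_linearMap_addHaar_eq_smul_addHaar (volume) hdet0
  have hF : ∀ x : EuclideanSpace ℝ (Fin d),
      ((1 + r * ‖Amap d ε (x + v)‖) ^ M)⁻¹ = g (diagLM d a (x + v)) := by
    intro x
    rw [hg_def, hcomp]
  have hint_comp : Integrable (fun x => g (diagLM d a x)) := by
    have h1 : Integrable g (Measure.map (diagLM d a) volume) := by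
      rw [hmap]
      exact hg_int.smul_measure ENNReal.ofReal_ne_top
    exact (integrable_map_measure hg_cont.aestronglyMeasurable hmeas.aemeasurable).mp h1
  have heq : (∫ x : EuclideanSpace ℝ (Fin d), g (diagLM d a x))
      = (r ^ d * ε ^ 2)⁻¹ * ∫ y, g y := by
    rw [← integral_map hmeas.aemeasurable hg_cont.aestronglyMeasurable, hmap,
      integral_smul_measure, hdet]
    rw [ENNReal.toReal_ofReal (by positivity), abs_of_pos (by positivity), smul_eq_mul]
  constructor
  · simp_rw [hF]
    rw [integral_add_right_eq_self (fun x => g (diagLM d a x)) v]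
    exact heq
  · simp_rw [hF]
    exact hint_comp.comp_add_right v

end Aux3


set_option maxHeartbeats 1600000 in
/-- The key interaction integral estimate: for `M ≥ 100d` there is
`C = C(d, M) > 0` such that for all `ε ∈ (0,1)`, all positive multiples `n` of 16 and all
`ℓ₁ < ℓ₂` in `N(n)`, the stated integral bound holds. -/
theorem stmt3 (d : ℕ) (hd : 4 ≤ d) (M : ℕ) (hM : 100 * d ≤ M) :
    ∃ C > (0 : ℝ), ∀ ε : ℝ, ε ∈ Set.Ioo (0 : ℝ) 1 →
      ∀ n : ℕ, 0 < n → 16 ∣ n → ∀ ℓ₁ ∈ Nset n, ∀ ℓ₂ ∈ Nset n, ℓ₁ < ℓ₂ →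
        (∫ x : EuclideanSpace ℝ (Fin d),
            ((1 + (2 : ℝ) ^ ℓ₁ * ‖Amap d ε (x + (2 : ℝ) ^ (2 * n + ℓ₁) • evec d)‖) ^ M)⁻¹ *
            ((1 + (2 : ℝ) ^ ℓ₂ * ‖Amap d ε (x + (2 : ℝ) ^ (2 * n + ℓ₂) • evec d)‖) ^ M)⁻¹) ≤
          C * (ε ^ 2)⁻¹ *
            (((ε * 2 ^ ℓ₁ * 2 ^ (2 * n)) ^ M)⁻¹ * ((2 : ℝ) ^ (d * ℓ₂))⁻¹ +
             ((ε * 2 ^ ℓ₂ * 2 ^ (2 * n)) ^ M)⁻¹ * ((2 : ℝ) ^ (d * ℓ₁))⁻¹) := by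
  classical
  set K : ℝ := ∫ y : EuclideanSpace ℝ (Fin d), ((1 + ‖y‖) ^ M)⁻¹ with hK_def
  have hK0 : 0 ≤ K := integral_nonneg fun y => by positivity
  refine ⟨K + 1, by linarith, ?_⟩
  rintro ε ⟨hε0, hε1⟩ n hn hn16 ℓ₁ hℓ₁ ℓ₂ hℓ₂ hlt
  have hd2 : 2 ≤ d := by omega
  have hdM : d < M := by omega
  -- basic facts about ℓ₁, ℓ₂
  have hℓ₁' : 0 < ℓ₁ ∧ 8 ∣ ℓ₁ ∧ n ≤ 4 * ℓ₁ ∧ 2 * ℓ₁ ≤ n := (Finset.mem_filter.mp hℓ₁).2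
  have h8 : 8 ≤ ℓ₁ := Nat.le_of_dvd hℓ₁'.1 hℓ₁'.2.1
  have h2ℓ₂ : 2 ≤ ℓ₂ := by omega
  set s : ℝ := (2 : ℝ) ^ (2 * n) with hs_def
  set r₁ : ℝ := (2 : ℝ) ^ ℓ₁ with hr₁_def
  set r₂ : ℝ := (2 : ℝ) ^ ℓ₂ with hr₂_def
  have hs : 0 < s := by positivity
  have hr₁ : 0 < r₁ := by positivity
  have hr₂ : 0 < r₂ := by positivity
  have hr₂4 : (4 : ℝ) ≤ r₂ := by
    calc (4 : ℝ) = 2 ^ 2 := by norm_num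
    _ ≤ 2 ^ ℓ₂ := pow_le_pow_right₀ one_le_two h2ℓ₂
  set v₁ : EuclideanSpace ℝ (Fin d) := (2 : ℝ) ^ (2 * n + ℓ₁) • evec d with hv₁_def
  set v₂ : EuclideanSpace ℝ (Fin d) := (2 : ℝ) ^ (2 * n + ℓ₂) • evec d with hv₂_def
  set F₁ : EuclideanSpace ℝ (Fin d) → ℝ :=
    fun x => ((1 + r₁ * ‖Amap d ε (x + v₁)‖) ^ M)⁻¹ with hF₁_def
  set F₂ : EuclideanSpace ℝ (Fin d) → ℝ :=
    fun x => ((1 + r₂ * ‖Amap d ε (x + v₂)‖) ^ M)⁻¹ with hF₂_def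
  set c₁ : ℝ := ((ε * r₁ * s) ^ M)⁻¹ with hc₁_def
  set c₂ : ℝ := ((ε * r₂ * s) ^ M)⁻¹ with hc₂_def
  have hc₁0 : 0 ≤ c₁ := by positivity
  have hc₂0 : 0 ≤ c₂ := by positivity
  have hF₁0 : ∀ x, 0 ≤ F₁ x := fun x => by rw [hF₁_def]; positivity
  have hF₂0 : ∀ x, 0 ≤ F₂ x := fun x => by rw [hF₂_def]; positivity
  -- the separation estimate
  have hsep : ∀ x : EuclideanSpace ℝ (Fin d),
      ε * s * r₂ / 2 ≤ ‖Amap d ε (x + v₂)‖ + ‖Amap d ε (x + v₁)‖ := by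
    intro x
    have hdiff : Amap d ε (x + v₂) - Amap d ε (x + v₁)
        = ((2 : ℝ) ^ (2 * n + ℓ₂) - (2 : ℝ) ^ (2 * n + ℓ₁)) • (ε • evec d) := by
      rw [hv₁_def, hv₂_def, Amap_add, Amap_add, Amap_smul, Amap_smul, Amap_evec]
      module
    have hnorm : ‖Amap d ε (x + v₂) - Amap d ε (x + v₁)‖
        = ((2 : ℝ) ^ (2 * n + ℓ₂) - (2 : ℝ) ^ (2 * n + ℓ₁)) * ε := by
      rw [hdiff, norm_smul, norm_smul, norm_evec d hd2, Real.norm_eq_abs, Real.norm_eq_abs,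
        abs_of_pos hε0]
      have hmono : (2 : ℝ) ^ (2 * n + ℓ₁) < (2 : ℝ) ^ (2 * n + ℓ₂) :=
        pow_lt_pow_right₀ one_lt_two (by omega)
      rw [abs_of_pos (by linarith)]
      ring
    have htri := norm_sub_le (Amap d ε (x + v₂)) (Amap d ε (x + v₁))
    have hgap : ε * s * r₂ / 2 ≤ ((2 : ℝ) ^ (2 * n + ℓ₂) - (2 : ℝ) ^ (2 * n + ℓ₁)) * ε := by
      have h1 : (2 : ℝ) ^ (2 * n + ℓ₂) = s * r₂ := by rw [hs_def, hr₂_def, pow_add]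
      have h2 : (2 : ℝ) ^ (2 * n + ℓ₁ + 1) ≤ (2 : ℝ) ^ (2 * n + ℓ₂) :=
        pow_le_pow_right₀ one_le_two (by omega)
      rw [pow_succ] at h2
      nlinarith [pow_pos (show (0:ℝ) < 2 by norm_num) (2 * n + ℓ₁)]
    linarith [hnorm ▸ htri]
  -- pointwise bound
  have hpt : ∀ x, F₁ x * F₂ x ≤ c₁ * F₂ x + c₂ * F₁ x := by
    intro x
    rcases le_or_gt (ε * s * r₂ / 4) ‖Amap d ε (x + v₁)‖ with hcase | hcase
    · -- F₁ x ≤ c₁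
      have hbase : ε * r₁ * s ≤ 1 + r₁ * ‖Amap d ε (x + v₁)‖ := by
        have h1 : ε * r₁ * s ≤ r₁ * (ε * s * r₂ / 4) := by
          have : ε * s * 4 ≤ ε * s * r₂ := by
            apply mul_le_mul_of_nonneg_left hr₂4 (by positivity)
          nlinarith
        have h2 : r₁ * (ε * s * r₂ / 4) ≤ r₁ * ‖Amap d ε (x + v₁)‖ :=
          mul_le_mul_of_nonneg_left hcase (le_of_lt hr₁)
        have h3 : (0:ℝ) ≤ r₁ * ‖Amap d ε (x + v₁)‖ := by positivity
        linarith
      have hF₁c : F₁ x ≤ c₁ := by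
        have h4 : (ε * r₁ * s) ^ M ≤ (1 + r₁ * ‖Amap d ε (x + v₁)‖) ^ M :=
          pow_le_pow_left₀ (by positivity) hbase M
        exact inv_anti₀ (by positivity) h4
      calc F₁ x * F₂ x ≤ c₁ * F₂ x := mul_le_mul_of_nonneg_right hF₁c (hF₂0 x)
        _ ≤ c₁ * F₂ x + c₂ * F₁ x := by
            have := mul_nonneg hc₂0 (hF₁0 x); linarith
    · -- then the second norm is large
      have hcase2 : ε * s * r₂ / 4 ≤ ‖Amap d ε (x + v₂)‖ := by
        have := hsep x
        linarith
      have hbase : ε * r₂ * s ≤ 1 + r₂ * ‖Amap d ε (x + v₂)‖ := by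
        have h1 : ε * r₂ * s ≤ r₂ * (ε * s * r₂ / 4) := by
          have : ε * s * 4 ≤ ε * s * r₂ := by
            apply mul_le_mul_of_nonneg_left hr₂4 (by positivity)
          nlinarith
        have h2 : r₂ * (ε * s * r₂ / 4) ≤ r₂ * ‖Amap d ε (x + v₂)‖ :=
          mul_le_mul_of_nonneg_left hcase2 (le_of_lt hr₂)
        have h3 : (0:ℝ) ≤ r₂ * ‖Amap d ε (x + v₂)‖ := by positivity
        linarith
      have hF₂c : F₂ x ≤ c₂ := by
        have h4 : (ε * r₂ * s) ^ M ≤ (1 + r₂ * ‖Amap d ε (x + v₂)‖) ^ M :=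
          pow_le_pow_left₀ (by positivity) hbase M
        exact inv_anti₀ (by positivity) h4
      calc F₁ x * F₂ x = F₂ x * F₁ x := by ring
        _ ≤ c₂ * F₁ x := mul_le_mul_of_nonneg_right hF₂c (hF₁0 x)
        _ ≤ c₁ * F₂ x + c₂ * F₁ x := by
            have := mul_nonneg hc₁0 (hF₂0 x); linarith
  -- the integral computations
  obtain ⟨hI₁eq, hI₁int⟩ := integral_weight d M hd2 hdM ε r₁ hε0 hr₁ v₁
  obtain ⟨hI₂eq, hI₂int⟩ := integral_weight d M hd2 hdM ε r₂ hε0 hr₂ v₂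
  have hint_sum : Integrable (fun x => c₁ * F₂ x + c₂ * F₁ x) :=
    (hI₂int.const_mul c₁).add (hI₁int.const_mul c₂)
  have hstep1 : (∫ x : EuclideanSpace ℝ (Fin d), F₁ x * F₂ x)
      ≤ ∫ x : EuclideanSpace ℝ (Fin d), (c₁ * F₂ x + c₂ * F₁ x) := by
    apply integral_mono_of_nonneg
    · exact Filter.Eventually.of_forall fun x => mul_nonneg (hF₁0 x) (hF₂0 x)
    · exact hint_sum
    · exact Filter.Eventually.of_forall hpt
  have hstep2 : (∫ x : EuclideanSpace ℝ (Fin d), (c₁ * F₂ x + c₂ * F₁ x))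
      = c₁ * ((r₂ ^ d * ε ^ 2)⁻¹ * K) + c₂ * ((r₁ ^ d * ε ^ 2)⁻¹ * K) := by
    rw [integral_add (hI₂int.const_mul c₁) (hI₁int.const_mul c₂),
      integral_const_mul, integral_const_mul, hI₁eq, hI₂eq]
  have hpow₁ : (2 : ℝ) ^ (d * ℓ₁) = r₁ ^ d := by
    rw [hr₁_def, mul_comm d ℓ₁, pow_mul]
  have hpow₂ : (2 : ℝ) ^ (d * ℓ₂) = r₂ ^ d := by
    rw [hr₂_def, mul_comm d ℓ₂, pow_mul]
  have hfinal : c₁ * ((r₂ ^ d * ε ^ 2)⁻¹ * K) + c₂ * ((r₁ ^ d * ε ^ 2)⁻¹ * K)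
      ≤ (K + 1) * (ε ^ 2)⁻¹ * (c₁ * ((2:ℝ) ^ (d * ℓ₂))⁻¹ + c₂ * ((2:ℝ) ^ (d * ℓ₁))⁻¹) := by
    rw [hpow₁, hpow₂]
    have hS : (0 : ℝ) ≤ (ε ^ 2)⁻¹ * (c₁ * (r₂ ^ d)⁻¹ + c₂ * (r₁ ^ d)⁻¹) := by positivity
    calc c₁ * ((r₂ ^ d * ε ^ 2)⁻¹ * K) + c₂ * ((r₁ ^ d * ε ^ 2)⁻¹ * K)
        = K * ((ε ^ 2)⁻¹ * (c₁ * (r₂ ^ d)⁻¹ + c₂ * (r₁ ^ d)⁻¹)) := by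
          rw [mul_inv, mul_inv]; ring
      _ ≤ (K + 1) * ((ε ^ 2)⁻¹ * (c₁ * (r₂ ^ d)⁻¹ + c₂ * (r₁ ^ d)⁻¹)) :=
          mul_le_mul_of_nonneg_right (by linarith) hS
      _ = (K + 1) * (ε ^ 2)⁻¹ * (c₁ * (r₂ ^ d)⁻¹ + c₂ * (r₁ ^ d)⁻¹) := by ring
  calc (∫ x : EuclideanSpace ℝ (Fin d), F₁ x * F₂ x)
      ≤ ∫ x : EuclideanSpace ℝ (Fin d), (c₁ * F₂ x + c₂ * F₁ x) := hstep1
    _ = c₁ * ((r₂ ^ d * ε ^ 2)⁻¹ * K) + c₂ * ((r₁ ^ d * ε ^ 2)⁻¹ * K) := hstep2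
    _ ≤ (K + 1) * (ε ^ 2)⁻¹ * (c₁ * ((2:ℝ) ^ (d * ℓ₂))⁻¹ + c₂ * ((2:ℝ) ^ (d * ℓ₁))⁻¹) := hfinal
end

section
/- For every positive multiple n of 16, every ξ in the support of 𝓕b_n satisfies |ξ₁ − ξ₂| ≤ 2^{n/2} and |ξ₂| ≥ 2^{n−1}. -/
open MeasureTheory Finset

noncomputable section Stmt4Aux

open Complex

/-- The one-dimensional factor appearing in the tensor decomposition of the
integrand of `FT d b_n`. -/
def Ffac (d : ℕ) (ε : ℝ) (θ : ℝ → ℝ) (n k : ℕ) (s : ℝ)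
    (ξ : EuclideanSpace ℝ (Fin d)) (i : Fin d) (u : ℝ) : ℂ :=
  Complex.exp ((((s * (17 / 12 * 2 ^ n * evec d i) - ξ i) * u : ℝ) : ℂ) * Complex.I) *
    ((θ ((2 : ℝ) ^ k * (if (i : ℕ) < 2 then ε else 1) *
        (u - (2 : ℝ) ^ (2 * n + k) * evec d i)) : ℝ) : ℂ) *
    (if (i : ℕ) = d - 1 then ((Real.sin (17 / 24 * ((2 : ℝ) ^ k * u)) : ℝ) : ℂ) else 1)

lemma sin_cplx (r : ℂ) :
    Complex.sin r =
      (Complex.exp (r * Complex.I) - Complex.exp (-(r * Complex.I))) /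
        (2 * Complex.I) := by
  rw [Complex.sin]
  have hI := Complex.I_ne_zero
  field_simp
  ring_nf
  simp [Complex.I_sq]

/-- Fubini for a product of one-variable functions over Euclidean space. -/
lemma integral_prod_eucl (d : ℕ) (f : Fin d → ℝ → ℂ) :
    ∫ x : EuclideanSpace ℝ (Fin d), ∏ i, f i (x i) = ∏ i, ∫ u : ℝ, f i u := by
  have h := (EuclideanSpace.volume_preserving_symm_measurableEquiv_toLp (Fin d)).symm
  rw [← h.integral_comp (MeasurableEquiv.measurableEmbedding _)
      (fun x : EuclideanSpace ℝ (Fin d) => ∏ i, f i (x i))]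
  have hco : ∀ (y : Fin d → ℝ) (i : Fin d),
      ((MeasurableEquiv.toLp 2 (Fin d → ℝ)).symm.symm y) i = y i := by
    intro y i
    rfl
  calc ∫ y : Fin d → ℝ, ∏ i, f i (((MeasurableEquiv.toLp 2 (Fin d → ℝ)).symm.symm y) i)
      = ∫ y : Fin d → ℝ, ∏ i, f i (y i) := by simp_rw [hco]
    _ = ∏ i, ∫ u : ℝ, f i u := MeasureTheory.integral_fintype_prod_eq_prod f

lemma integrable_prod_eucl (d : ℕ) (f : Fin d → ℝ → ℂ) (hf : ∀ i, Integrable (f i)) :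
    Integrable (fun x : EuclideanSpace ℝ (Fin d) => ∏ i, f i (x i)) := by
  have h := (EuclideanSpace.volume_preserving_symm_measurableEquiv_toLp (Fin d)).symm
  rw [← h.integrable_comp_emb (MeasurableEquiv.measurableEmbedding _)]
  have hco : ∀ (y : Fin d → ℝ) (i : Fin d),
      ((MeasurableEquiv.toLp 2 (Fin d → ℝ)).symm.symm y) i = y i := by
    intro y i
    rfl
  have : ((fun x : EuclideanSpace ℝ (Fin d) => ∏ i, f i (x i)) ∘
      (MeasurableEquiv.toLp 2 (Fin d → ℝ)).symm.symm) = fun y : Fin d → ℝ => ∏ i, f i (y i) := by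
    funext y; simp_rw [Function.comp, hco]
  rw [this]
  exact MeasureTheory.Integrable.fintype_prod hf

lemma y_apply (d : ℕ) (ε : ℝ) (n k : ℕ) (x : EuclideanSpace ℝ (Fin d)) (i : Fin d) :
    ((2 : ℝ) ^ k • Amap d ε (x - (2 : ℝ) ^ (2 * n + k) • evec d)) i =
      (2 : ℝ) ^ k * (if (i : ℕ) < 2 then ε else 1) *
        (x i - (2 : ℝ) ^ (2 * n + k) * evec d i) := by
  simp only [PiLp.smul_apply, smul_eq_mul, Amap, PiLp.sub_apply]
  ring

lemma prod_Ffac_eq (d : ℕ) (hd : 4 ≤ d) (ε : ℝ) (θ : ℝ → ℝ) (n k : ℕ) (s : ℝ)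
    (ξ x : EuclideanSpace ℝ (Fin d)) :
    ∏ i, Ffac d ε θ n k s ξ i (x i) =
      Complex.exp
        (((s * (17 / 12 * 2 ^ n * (inner ℝ (evec d) x : ℝ)) - (inner ℝ x ξ : ℝ) : ℝ) : ℂ) *
          Complex.I) *
      ((∏ i, θ (((2 : ℝ) ^ k • Amap d ε (x - (2 : ℝ) ^ (2 * n + k) • evec d)) i) : ℝ) : ℂ) *
      ((Real.sin (17 / 24 *
          coord d (d - 1) ((2 : ℝ) ^ k • Amap d ε (x - (2 : ℝ) ^ (2 * n + k) • evec d))) : ℝ) : ℂ) := by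
  have hd1 : d - 1 < d := by omega
  set i₀ : Fin d := ⟨d - 1, hd1⟩ with hi₀
  unfold Ffac
  rw [Finset.prod_mul_distrib, Finset.prod_mul_distrib]
  congr 1
  · congr 1
    · -- the exponential factors
      rw [← Complex.exp_sum]
      congr 1
      rw [← Finset.sum_mul]
      congr 1
      rw [← Complex.ofReal_sum]
      congr 1
      have h1 : (inner ℝ (evec d) x : ℝ) = ∑ i, evec d i * x i := by
        simp [PiLp.inner_apply, RCLike.inner_apply, mul_comm]
      have h2 : (inner ℝ x ξ : ℝ) = ∑ i, x i * ξ i := by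
        simp [PiLp.inner_apply, RCLike.inner_apply, mul_comm]
      rw [h1, h2, Finset.mul_sum, Finset.mul_sum, ← Finset.sum_sub_distrib]
      apply Finset.sum_congr rfl
      intro i _
      ring
    · -- the theta factors
      rw [Complex.ofReal_prod]
      apply Finset.prod_congr rfl
      intro i _
      rw [y_apply]
  · -- the sine factors
    rw [Finset.prod_eq_single i₀]
    · have hval : (i₀ : ℕ) = d - 1 := rfl
      rw [if_pos hval]
      congr 2
      have hcoord : coord d (d - 1) ((2 : ℝ) ^ k • Amap d ε
          (x - (2 : ℝ) ^ (2 * n + k) • evec d)) =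
          ((2 : ℝ) ^ k • Amap d ε (x - (2 : ℝ) ^ (2 * n + k) • evec d)) i₀ := by
        rw [coord, dif_pos hd1]
      rw [hcoord, y_apply]
      have h2 : ¬ ((i₀ : ℕ) < 2) := by simp only [hi₀]; omega
      rw [if_neg h2]
      have h3 : evec d i₀ = 0 := by
        rw [evec]
        exact if_neg h2
      rw [h3]
      ring
    · intro j _ hj
      have : ¬ ((j : ℕ) = d - 1) := by
        intro hc
        exact hj (Fin.ext hc)
      rw [if_neg this]
    · intro h
      exact absurd (Finset.mem_univ i₀) h

lemma integrand_eq (d : ℕ) (hd : 4 ≤ d) (ε : ℝ) (θ : ℝ → ℝ) (n k : ℕ)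
    (ξ x : EuclideanSpace ℝ (Fin d)) :
    Complex.exp (-(Complex.I * ((inner ℝ x ξ : ℝ) : ℂ))) *
      (((2 : ℝ) ^ k * phi d θ ((2 : ℝ) ^ k • Amap d ε (x - (2 : ℝ) ^ (2 * n + k) • evec d)) *
        Real.sin (17 / 12 * 2 ^ n * (inner ℝ (evec d) x : ℝ)) : ℝ) : ℂ) =
    ((2 : ℝ) ^ k : ℂ) *
      ((∏ i, Ffac d ε θ n k 1 ξ i (x i)) - (∏ i, Ffac d ε θ n k (-1) ξ i (x i))) /
      (2 * Complex.I) := by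
  rw [prod_Ffac_eq d hd ε θ n k 1 ξ x, prod_Ffac_eq d hd ε θ n k (-1) ξ x]
  set L : ℝ := 17 / 12 * 2 ^ n * (inner ℝ (evec d) x : ℝ) with hL
  set P : ℝ := (inner ℝ x ξ : ℝ) with hP
  have e1 : ((1 * L - P : ℝ) : ℂ) * Complex.I =
      (L : ℂ) * Complex.I + -(Complex.I * (P : ℂ)) := by push_cast; ring
  have e2 : (((-1) * L - P : ℝ) : ℂ) * Complex.I =
      -((L : ℂ) * Complex.I) + -(Complex.I * (P : ℂ)) := by push_cast; ring
  rw [e1, e2, Complex.exp_add, Complex.exp_add]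
  rw [phi]
  push_cast
  rw [sin_cplx (L : ℂ)]
  ring

lemma Ffac_integrable (d : ℕ) (ε : ℝ) (hε : 0 < ε) (θ : SchwartzMap ℝ ℝ) (n k : ℕ) (s : ℝ)
    (ξ : EuclideanSpace ℝ (Fin d)) (i : Fin d) :
    Integrable (Ffac d ε (fun t => θ t) n k s ξ i) := by
  set b : ℝ := (2 : ℝ) ^ k * (if (i : ℕ) < 2 then ε else 1) with hb
  have hif : (0 : ℝ) < (if (i : ℕ) < 2 then ε else 1) := by
    split
    · exact hε
    · norm_num
  have hbpos : 0 < b := by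
    rw [hb]; positivity
  set m : ℝ := (2 : ℝ) ^ (2 * n + k) * evec d i with hm
  have h1 : Integrable (fun v : ℝ => θ v) := θ.integrable
  have h2 : Integrable (fun v : ℝ => θ (v - b * m)) := h1.comp_sub_right (b * m)
  have h3 : Integrable (fun u : ℝ => θ (b * u - b * m)) := h2.comp_mul_left' (ne_of_gt hbpos)
  have h4 : Integrable (fun u : ℝ => θ (b * (u - m))) := by
    simpa [mul_sub] using h3
  have h5 : Integrable (fun u : ℝ => ((θ (b * (u - m)) : ℝ) : ℂ)) := h4.ofReal
  set G : ℝ → ℂ := fun u =>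
    Complex.exp ((((s * (17 / 12 * 2 ^ n * evec d i) - ξ i) * u : ℝ) : ℂ) * Complex.I) *
      (if (i : ℕ) = d - 1 then ((Real.sin (17 / 24 * ((2 : ℝ) ^ k * u)) : ℝ) : ℂ) else 1)
    with hG
  have hGcont : Continuous G := by
    apply Continuous.mul
    · exact Complex.continuous_exp.comp (by fun_prop)
    · split
      · fun_prop
      · exact continuous_const
  have hGbdd : ∀ u : ℝ, ‖G u‖ ≤ 1 := by
    intro u
    rw [hG]
    simp only [norm_mul, Complex.norm_exp_ofReal_mul_I, one_mul]
    split
    · rw [Complex.norm_real, Real.norm_eq_abs]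
      exact abs_le.mpr ⟨Real.neg_one_le_sin _, Real.sin_le_one _⟩
    · simp
  have hmul := MeasureTheory.Integrable.bdd_mul h5 hGcont.aestronglyMeasurable (Filter.Eventually.of_forall hGbdd)
  have heq : (fun u : ℝ => G u * ((θ (b * (u - m)) : ℝ) : ℂ)) =
      Ffac d ε (fun t => θ t) n k s ξ i := by
    funext u
    rw [hG, Ffac]
    ring
  rwa [heq] at hmul

lemma FT_bfun_eq (d : ℕ) (hd : 4 ≤ d) (q ε : ℝ) (hε : 0 < ε) (θ : SchwartzMap ℝ ℝ) (n : ℕ)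
    (ξ : EuclideanSpace ℝ (Fin d)) :
    FT d (fun x => (bfun d q ε (fun t => θ t) n x : ℂ)) ξ =
      (((n : ℝ) ^ (-(1 / (2 * q))) : ℝ) : ℂ) *
        ∑ k ∈ Nset n, ((2 : ℝ) ^ k : ℂ) *
          ((∏ i, ∫ u : ℝ, Ffac d ε (fun t => θ t) n k 1 ξ i u) -
           (∏ i, ∫ u : ℝ, Ffac d ε (fun t => θ t) n k (-1) ξ i u)) / (2 * Complex.I) := by
  have hint : ∀ (s' : ℝ) (k : ℕ), Integrable
      (fun x : EuclideanSpace ℝ (Fin d) => ∏ i, Ffac d ε (fun t => θ t) n k s' ξ i (x i)) :=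
    fun s' k => integrable_prod_eucl d _ (fun i => Ffac_integrable d ε hε θ n k s' ξ i)
  have hpt : ∀ x : EuclideanSpace ℝ (Fin d),
      Complex.exp (-(Complex.I * ((inner ℝ x ξ : ℝ) : ℂ))) *
        ((bfun d q ε (fun t => θ t) n x : ℝ) : ℂ) =
      (((n : ℝ) ^ (-(1 / (2 * q))) : ℝ) : ℂ) *
        ∑ k ∈ Nset n, ((2 : ℝ) ^ k : ℂ) *
          ((∏ i, Ffac d ε (fun t => θ t) n k 1 ξ i (x i)) -
           (∏ i, Ffac d ε (fun t => θ t) n k (-1) ξ i (x i))) / (2 * Complex.I) := by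
    intro x
    rw [bfun, Complex.ofReal_mul, Complex.ofReal_sum, mul_left_comm]
    congr 1
    rw [Finset.mul_sum]
    exact Finset.sum_congr rfl fun k _ => integrand_eq d hd ε (fun t => θ t) n k ξ x
  rw [FT, MeasureTheory.integral_congr_ae (Filter.Eventually.of_forall hpt),
    MeasureTheory.integral_const_mul]
  congr 1
  rw [MeasureTheory.integral_finset_sum]
  · apply Finset.sum_congr rfl
    intro k _
    rw [MeasureTheory.integral_div, MeasureTheory.integral_const_mul,
      MeasureTheory.integral_sub (hint 1 k) (hint (-1) k), integral_prod_eucl, integral_prod_eucl]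
  · intro k _
    exact (((hint 1 k).sub (hint (-1) k)).const_mul _).div_const _

lemma oneD_integral (θ : SchwartzMap ℝ ℝ) (a : ℝ) (ha : 0 < a) (β m : ℝ) :
    (∫ u : ℝ, Complex.exp (((β * u : ℝ) : ℂ) * Complex.I) * ((θ (a * (u - m)) : ℝ) : ℂ)) =
      |a⁻¹| • (Complex.exp (((β * m : ℝ) : ℂ) * Complex.I) *
        FT1 (fun t => (θ t : ℂ)) (-(β / a))) := by
  have ha' : a ≠ 0 := ne_of_gt ha
  have h1 := MeasureTheory.integral_add_right_eq_self (μ := volume)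
    (fun u : ℝ => Complex.exp (((β * u : ℝ) : ℂ) * Complex.I) * ((θ (a * (u - m)) : ℝ) : ℂ)) m
  rw [← h1]
  have h3 : ∀ u : ℝ,
      Complex.exp (((β * (u + m) : ℝ) : ℂ) * Complex.I) * ((θ (a * (u + m - m)) : ℝ) : ℂ) =
      (fun v : ℝ => Complex.exp (((β * (v / a + m) : ℝ) : ℂ) * Complex.I) * ((θ v : ℝ) : ℂ))
        (a * u) := by
    intro u
    simp only
    rw [mul_div_cancel_left₀ u ha', add_sub_cancel_right]
  simp_rw [h3]
  rw [MeasureTheory.Measure.integral_comp_mul_left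
    (fun v : ℝ => Complex.exp (((β * (v / a + m) : ℝ) : ℂ) * Complex.I) * ((θ v : ℝ) : ℂ)) a]
  congr 1
  have h4 : ∀ v : ℝ,
      Complex.exp (((β * (v / a + m) : ℝ) : ℂ) * Complex.I) * ((θ v : ℝ) : ℂ) =
      Complex.exp (((β * m : ℝ) : ℂ) * Complex.I) *
        (Complex.exp (-(Complex.I * ((v * (-(β / a)) : ℝ) : ℂ))) * ((θ v : ℝ) : ℂ)) := by
    intro v
    rw [← mul_assoc, ← Complex.exp_add]
    congr 2
    push_cast
    field_simp
    ring
  simp_rw [h4]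
  rw [MeasureTheory.integral_const_mul, FT1]

lemma Ffac_small (d : ℕ) (hd : 4 ≤ d) (ε : ℝ) (hε : 0 < ε) (θ : SchwartzMap ℝ ℝ)
    (hθ0 : ∀ t : ℝ, 1 / (100 * d) ≤ |t| → FT1 (fun x => (θ x : ℂ)) t = 0)
    (n k : ℕ) (s : ℝ) (ξ : EuclideanSpace ℝ (Fin d)) (i : Fin d) (hi : (i : ℕ) < 2)
    (h : (∫ u : ℝ, Ffac d ε (fun t => θ t) n k s ξ i u) ≠ 0) :
    |ξ i - s * (17 / 12 * 2 ^ n * (Real.sqrt 2 / 2))| < 2 ^ k * ε / (100 * d) := by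
  have hd1 : ¬ ((i : ℕ) = d - 1) := by omega
  have he : evec d i = Real.sqrt 2 / 2 := by rw [evec]; exact if_pos hi
  set β : ℝ := s * (17 / 12 * 2 ^ n * (Real.sqrt 2 / 2)) - ξ i with hβ
  set a : ℝ := (2 : ℝ) ^ k * ε with haa
  have ha : 0 < a := by positivity
  set m : ℝ := (2 : ℝ) ^ (2 * n + k) * (Real.sqrt 2 / 2) with hm
  have heq : ∀ u : ℝ, Ffac d ε (fun t => θ t) n k s ξ i u =
      Complex.exp (((β * u : ℝ) : ℂ) * Complex.I) * ((θ (a * (u - m)) : ℝ) : ℂ) := by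
    intro u
    rw [Ffac, if_neg hd1, if_pos hi, he, mul_one]
  rw [show (fun u => Ffac d ε (fun t => θ t) n k s ξ i u) = fun u =>
      Complex.exp (((β * u : ℝ) : ℂ) * Complex.I) * ((θ (a * (u - m)) : ℝ) : ℂ) from
    funext heq] at h
  rw [oneD_integral θ a ha β m] at h
  have hFT : FT1 (fun t => (θ t : ℂ)) (-(β / a)) ≠ 0 := by
    intro hzero
    rw [hzero] at h
    simp at h
  have hsmall : |(-(β / a))| < 1 / (100 * d) := by
    by_contra hcon
    exact hFT (hθ0 _ (le_of_not_gt hcon))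
  rw [abs_neg, abs_div, abs_of_pos ha] at hsmall
  rw [div_lt_iff₀ ha] at hsmall
  have : |ξ i - s * (17 / 12 * 2 ^ n * (Real.sqrt 2 / 2))| = |β| := by
    rw [hβ, abs_sub_comm]
  rw [this]
  calc |β| < 1 / (100 * d) * a := hsmall
    _ = 2 ^ k * ε / (100 * d) := by rw [haa]; ring

end Stmt4Aux

/-- Every `ξ` in the support of `𝓕b_n` satisfies `|ξ₁ - ξ₂| ≤ 2^{n/2}`
and `|ξ₂| ≥ 2^{n-1}`. -/
theorem stmt4 (d : ℕ) (hd : 4 ≤ d) (q : ℝ) (hq1 : 1 ≤ q) (hq2 : q < d / 2)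
    (ε : ℝ) (hε : ε ∈ Set.Ioo (0 : ℝ) 1)
    (θ : SchwartzMap ℝ ℝ)
    (hθsm : ContDiff ℝ (⊤ : ℕ∞) fun ξ : ℝ => FT1 (fun x => (θ x : ℂ)) ξ)
    (hθ01 : ∀ ξ : ℝ, (FT1 (fun x => (θ x : ℂ)) ξ).im = 0 ∧
      (FT1 (fun x => (θ x : ℂ)) ξ).re ∈ Set.Icc (0 : ℝ) 1)
    (hθ1 : ∀ ξ : ℝ, |ξ| ≤ 1 / (200 * d) → FT1 (fun x => (θ x : ℂ)) ξ = 1)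
    (hθ0 : ∀ ξ : ℝ, 1 / (100 * d) ≤ |ξ| → FT1 (fun x => (θ x : ℂ)) ξ = 0)
    (n : ℕ) (hn : 0 < n) (h16 : 16 ∣ n) :
    ∀ ξ ∈ Function.support (FT d fun x => (bfun d q ε (fun t => θ t) n x : ℂ)),
      |coord d 0 ξ - coord d 1 ξ| ≤ 2 ^ (n / 2) ∧ (2 : ℝ) ^ (n - 1) ≤ |coord d 1 ξ| := by
  intro ξ hξ
  have hξ' : FT d (fun x => (bfun d q ε (fun t => θ t) n x : ℂ)) ξ ≠ 0 :=
    Function.mem_support.mp hξ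
  rw [FT_bfun_eq d hd q ε hε.1 θ n ξ] at hξ'
  have hC : (((n : ℝ) ^ (-(1 / (2 * q))) : ℝ) : ℂ) ≠ 0 := by
    simp only [ne_eq, Complex.ofReal_eq_zero]
    exact ne_of_gt (Real.rpow_pos_of_pos (by exact_mod_cast hn) _)
  have hsum : (∑ k ∈ Nset n, ((2 : ℝ) ^ k : ℂ) *
      ((∏ i, ∫ u : ℝ, Ffac d ε (fun t => θ t) n k 1 ξ i u) -
       (∏ i, ∫ u : ℝ, Ffac d ε (fun t => θ t) n k (-1) ξ i u)) / (2 * Complex.I)) ≠ 0 := by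
    intro h0
    rw [h0, mul_zero] at hξ'
    exact hξ' rfl
  obtain ⟨k, hk, hterm⟩ : ∃ k ∈ Nset n, ((2 : ℝ) ^ k : ℂ) *
      ((∏ i, ∫ u : ℝ, Ffac d ε (fun t => θ t) n k 1 ξ i u) -
       (∏ i, ∫ u : ℝ, Ffac d ε (fun t => θ t) n k (-1) ξ i u)) / (2 * Complex.I) ≠ 0 := by
    by_contra hcon
    push_neg at hcon
    exact hsum (Finset.sum_eq_zero hcon)
  have hsub : (∏ i, ∫ u : ℝ, Ffac d ε (fun t => θ t) n k 1 ξ i u) ≠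
      (∏ i, ∫ u : ℝ, Ffac d ε (fun t => θ t) n k (-1) ξ i u) ∨ True := Or.inr trivial
  obtain ⟨s, hs, hprod⟩ : ∃ s : ℝ, (s = 1 ∨ s = -1) ∧
      (∏ i, ∫ u : ℝ, Ffac d ε (fun t => θ t) n k s ξ i u) ≠ 0 := by
    by_contra hcon
    push_neg at hcon
    have h1 := hcon 1 (Or.inl rfl)
    have h2 := hcon (-1) (Or.inr rfl)
    rw [h1, h2, sub_self, mul_zero, zero_div] at hterm
    exact hterm rfl
  have i0 : Fin d := ⟨0, by omega⟩
  have hall := Finset.prod_ne_zero_iff.mp hprod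
  have h0 := Ffac_small d hd ε hε.1 θ hθ0 n k s ξ ⟨0, by omega⟩ (by norm_num)
    (hall ⟨0, by omega⟩ (Finset.mem_univ _))
  have h1 := Ffac_small d hd ε hε.1 θ hθ0 n k s ξ ⟨1, by omega⟩ (by norm_num)
    (hall ⟨1, by omega⟩ (Finset.mem_univ _))
  have hc0 : coord d 0 ξ = ξ ⟨0, by omega⟩ := by rw [coord, dif_pos]
  have hc1 : coord d 1 ξ = ξ ⟨1, by omega⟩ := by rw [coord, dif_pos]
  -- numeric facts about k and n
  have hn16 : 16 ≤ n := Nat.le_of_dvd hn h16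
  have hkfacts := (Finset.mem_filter.mp hk).2
  have hk2 : k ≤ n / 2 := by omega
  have h2k : (2 : ℝ) ^ k ≤ 2 ^ (n / 2) := pow_le_pow_right₀ one_le_two hk2
  have hd4 : (4 : ℝ) ≤ (d : ℝ) := by exact_mod_cast hd
  have hBle : 2 ^ k * ε / (100 * (d : ℝ)) ≤ 2 ^ (n / 2) / 400 := by
    apply div_le_div₀ (by positivity)
    · calc (2 : ℝ) ^ k * ε ≤ 2 ^ k * 1 := by
            have := hε.2.le
            gcongr
        _ = 2 ^ k := mul_one _
        _ ≤ 2 ^ (n / 2) := h2k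
    · norm_num
    · linarith
  set lam : ℝ := 17 / 12 * 2 ^ n * (Real.sqrt 2 / 2) with hlamdef
  have h0' : |ξ ⟨0, by omega⟩ - s * lam| < 2 ^ (n / 2) / 400 := lt_of_lt_of_le h0 hBle
  have h1' : |ξ ⟨1, by omega⟩ - s * lam| < 2 ^ (n / 2) / 400 := lt_of_lt_of_le h1 hBle
  have habs0 := abs_sub_abs_le_abs_sub (ξ ⟨0, by omega⟩ - s * lam) (ξ ⟨1, by omega⟩ - s * lam)
  constructor
  · rw [hc0, hc1]
    have htri : |ξ ⟨0, by omega⟩ - ξ ⟨1, by omega⟩| ≤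
        |ξ ⟨0, by omega⟩ - s * lam| + |ξ ⟨1, by omega⟩ - s * lam| := by
      have := abs_sub_le (ξ ⟨0, by omega⟩) (s * lam) (ξ ⟨1, by omega⟩)
      rwa [abs_sub_comm (s * lam) (ξ ⟨1, by omega⟩)] at this
    have hpow : (0 : ℝ) < 2 ^ (n / 2) := by positivity
    linarith
  · rw [hc1]
    have hs2 : Real.sqrt 2 ^ 2 = 2 := Real.sq_sqrt (by norm_num)
    have hs2' : (0 : ℝ) ≤ Real.sqrt 2 := Real.sqrt_nonneg 2
    have hpn : (0 : ℝ) < 2 ^ n := by positivity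
    have hlam1 : (2 : ℝ) ^ n ≤ lam := by
      rw [hlamdef]
      nlinarith
    have hslam : |s * lam| = lam := by
      rcases hs with rfl | rfl
      · rw [one_mul, abs_of_nonneg (by linarith)]
      · rw [neg_one_mul, abs_neg, abs_of_nonneg (by linarith)]
    have htri2 : lam - |ξ ⟨1, by omega⟩ - s * lam| ≤ |ξ ⟨1, by omega⟩| := by
      have := abs_sub_abs_le_abs_sub (s * lam) (ξ ⟨1, by omega⟩)
      rw [hslam, abs_sub_comm] at this
      linarith
    have hA : (2 : ℝ) ^ (n / 2) ≤ 2 ^ (n - 1) := pow_le_pow_right₀ one_le_two (by omega)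
    have hB2 : (2 : ℝ) ^ n = 2 * 2 ^ (n - 1) := by
      rw [← pow_succ']
      congr 1
      omega
    have hpow1 : (0 : ℝ) < 2 ^ (n - 1) := by positivity
    linarith
end

section
/- For every positive multiple n of 16 and all j, k ∈ N(n) with j < k, let Φ_{k,j}(x) = φ(2^k A(x − 2^{2n+k} e))·φ(2^j A(x − 2^{2n+j} e)). Then the support of 𝓕Φ_{k,j} is contained in the annulus {ξ ∈ ℝ^d : (33/48)·2^k ≤ |ξ| ≤ (35/48)·2^k}. -/
open MeasureTheory Finset

section AuxLemmas

open MeasureTheory FourierTransform Complex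

variable (θ : SchwartzMap ℝ ℝ)

lemma FT1_eq_fourierIntegral (f : ℝ → ℂ) (ζ : ℝ) :
    FT1 f ζ = 𝓕 f (ζ / (2 * Real.pi)) := by
  rw [FT1, Real.fourier_eq']
  congr 1
  ext x
  rw [smul_eq_mul]
  congr 2
  rw [show ((inner ℝ x (ζ / (2 * Real.pi)) : ℝ)) = x * (ζ / (2 * Real.pi)) from by rw [RCLike.inner_apply', conj_trivial]]
  have hπ : (Real.pi : ℂ) ≠ 0 := Complex.ofReal_ne_zero.mpr Real.pi_ne_zero
  push_cast
  field_simp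

lemma theta_bound : ∃ C, ∀ x : ℝ, ‖(θ x : ℂ)‖ ≤ C := by
  obtain ⟨C, hC⟩ := θ.decay 0 0
  exact ⟨C, fun x => by simpa using hC.2 x⟩

lemma integrable_theta_scaled {α : ℝ} (hα : α ≠ 0) (s : ℝ) :
    Integrable (fun t : ℝ => (θ (α * (t - s)) : ℂ)) := by
  have h1 : Integrable (fun u : ℝ => (θ u : ℂ)) := (θ.integrable).ofReal
  have h2 : Integrable (fun t : ℝ => (θ (t - α * s) : ℂ)) := h1.comp_sub_right (α * s)
  have h3 := (integrable_comp_mul_left_iff (fun t : ℝ => (θ (t - α * s) : ℂ)) hα).mpr h2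
  exact h3.congr (Filter.Eventually.of_forall fun t => by show ((θ (α*t - α*s) : ℝ) : ℂ) = ((θ (α*(t-s)) : ℝ) : ℂ); rw [mul_sub])

lemma cont_theta_scaled (α s : ℝ) : Continuous (fun t : ℝ => (θ (α * (t - s)) : ℂ)) :=
  Complex.continuous_ofReal.comp (θ.continuous.comp (by continuity))

lemma ft1_scaled {α : ℝ} (hα : 0 < α) (s ζ : ℝ) :
    FT1 (fun t => (θ (α * (t - s)) : ℂ)) ζ
      = Complex.exp (-(Complex.I * (s * ζ : ℝ))) * (α⁻¹ : ℝ) *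
          FT1 (fun x => (θ x : ℂ)) (ζ / α) := by
  have hα' : α ≠ 0 := ne_of_gt hα
  rw [FT1]
  have h1 : (∫ t : ℝ, Complex.exp (-(Complex.I * (t * ζ : ℝ))) * (θ (α * (t - s)) : ℂ))
      = ∫ t : ℝ, Complex.exp (-(Complex.I * ((t + s) * ζ : ℝ))) * (θ (α * t) : ℂ) := by
    rw [← integral_add_right_eq_self
      (fun t => Complex.exp (-(Complex.I * (t * ζ : ℝ))) * (θ (α * (t - s)) : ℂ)) s]
    congr 1; ext t
    congr 2
    ring_nf
  rw [h1]
  have h2 : ∀ t : ℝ, Complex.exp (-(Complex.I * ((t + s) * ζ : ℝ))) * (θ (α * t) : ℂ)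
      = Complex.exp (-(Complex.I * (s * ζ : ℝ))) *
          (Complex.exp (-(Complex.I * (t * ζ : ℝ))) * (θ (α * t) : ℂ)) := by
    intro t
    rw [← mul_assoc, ← Complex.exp_add]
    congr 2
    push_cast; ring
  simp_rw [h2]
  rw [integral_const_mul]
  have h3 : (∫ t : ℝ, Complex.exp (-(Complex.I * (t * ζ : ℝ))) * (θ (α * t) : ℂ))
      = |α⁻¹| • ∫ u : ℝ, Complex.exp (-(Complex.I * (u * (ζ / α) : ℝ))) * (θ u : ℂ) := by
    rw [← MeasureTheory.Measure.integral_comp_mul_left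
      (fun u => Complex.exp (-(Complex.I * (u * (ζ / α) : ℝ))) * (θ u : ℂ)) α]
    congr 1; ext t
    congr 3
    have hαc : (α : ℂ) ≠ 0 := by exact_mod_cast hα'
    push_cast
    field_simp
  rw [h3, abs_of_pos (inv_pos.mpr hα), FT1, Complex.real_smul]
  push_cast
  ring

lemma ft1_inversion (f : ℝ → ℂ) (hf : Integrable f) (hc : Continuous f)
    (hFT : Integrable (FT1 f)) (t : ℝ) :
    f t = (2 * Real.pi : ℝ)⁻¹ *
      ∫ τ : ℝ, Complex.exp (Complex.I * (t * τ : ℝ)) * FT1 f τ := by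
  have h2π : (0:ℝ) < 2 * Real.pi := by positivity
  have hFT𝓕 : Integrable (𝓕 f) := by
    have h : 𝓕 f = fun w => FT1 f (2 * Real.pi * w) := by
      funext w; rw [FT1_eq_fourierIntegral]; congr 1; field_simp
    rw [h]
    exact (integrable_comp_mul_left_iff (FT1 f) (ne_of_gt h2π)).mpr hFT
  have hinv := hf.fourierInv_fourier_eq (v := t) hFT𝓕 hc.continuousAt
  rw [← hinv, Real.fourierInv_eq']
  have := MeasureTheory.Measure.integral_comp_mul_left
    (fun v : ℝ => Complex.exp ((2 * Real.pi * (inner ℝ v t : ℝ) : ℝ) * Complex.I) • 𝓕 f v)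
    (2 * Real.pi)⁻¹
  rw [abs_of_pos (by positivity : (0:ℝ) < ((2*Real.pi)⁻¹)⁻¹)] at this
  rw [inv_inv] at this
  have h2 : ∀ τ : ℝ,
      Complex.exp ((2 * Real.pi * (inner ℝ ((2*Real.pi)⁻¹ * τ) t : ℝ) : ℝ) * Complex.I)
        • 𝓕 f ((2*Real.pi)⁻¹ * τ)
      = Complex.exp (Complex.I * (t * τ : ℝ)) * FT1 f τ := by
    intro τ
    rw [smul_eq_mul, FT1_eq_fourierIntegral]
    have hr : 2*Real.pi * (inner ℝ ((2*Real.pi)⁻¹ * τ) t : ℝ) = t * τ := by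
      rw [show ((inner ℝ ((2*Real.pi)⁻¹ * τ) t : ℝ)) = (2*Real.pi)⁻¹ * τ * t from by rw [RCLike.inner_apply', conj_trivial]]
      have h := mul_inv_cancel₀ (ne_of_gt h2π)
      linear_combination (τ * t) * h
    rw [hr]
    congr 2
    · rw [mul_comm]
    · rw [div_eq_inv_mul]
  simp only [h2] at this
  rw [this, Complex.real_smul]
  have hπc : (Real.pi : ℂ) ≠ 0 := Complex.ofReal_ne_zero.mpr Real.pi_ne_zero
  push_cast
  field_simp
  congr 1; ext v; ring_nf

lemma ft1_scaled_vanish {R α : ℝ} (hR : 0 ≤ R) (hα : 0 < α)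
    (hvan : ∀ ζ : ℝ, R ≤ |ζ| → FT1 (fun x => (θ x : ℂ)) ζ = 0)
    (s : ℝ) {ζ : ℝ} (hζ : α * R ≤ |ζ|) :
    FT1 (fun t => (θ (α * (t - s)) : ℂ)) ζ = 0 := by
  have h : R ≤ |ζ / α| := by
    rw [abs_div, abs_of_pos hα, le_div_iff₀ hα]
    linarith [hζ]
  rw [ft1_scaled θ hα s ζ, hvan _ h, mul_zero]

lemma ft1_prod_support {R : ℝ} (hR : 0 < R)
    (hvan : ∀ ζ : ℝ, R ≤ |ζ| → FT1 (fun x => (θ x : ℂ)) ζ = 0)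
    (hcont : Continuous (FT1 (fun x => (θ x : ℂ))))
    {α β : ℝ} (hα : 0 < α) (hβ : 0 < β) (s s' : ℝ) {ζ : ℝ}
    (hζ : (α + β) * R < |ζ|) :
    FT1 (fun t => (θ (α * (t - s)) : ℂ) * (θ (β * (t - s')) : ℂ)) ζ = 0 := by
  have hfi := integrable_theta_scaled θ (ne_of_gt hα) s
  have hgi := integrable_theta_scaled θ (ne_of_gt hβ) s'
  have hfc := cont_theta_scaled θ α s
  have hgc := cont_theta_scaled θ β s'
  have hFTg_eq : ∀ ζ' : ℝ, FT1 (fun t => (θ (β * (t - s')) : ℂ)) ζ'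
      = Complex.exp (-(Complex.I * (s' * ζ' : ℝ))) * (β⁻¹ : ℝ) *
          FT1 (fun x => (θ x : ℂ)) (ζ' / β) := fun ζ' => ft1_scaled θ hβ s' ζ'
  have hFTg_cont : Continuous (FT1 (fun t => (θ (β * (t - s')) : ℂ))) := by
    rw [funext hFTg_eq]
    apply Continuous.mul
    · apply Continuous.mul
      · exact Complex.continuous_exp.comp (by continuity)
      · exact continuous_const
    · exact hcont.comp (continuous_id.div_const β)
  have hFTg_van : ∀ ζ' : ℝ, β * R ≤ |ζ'| →
      FT1 (fun t => (θ (β * (t - s')) : ℂ)) ζ' = 0 :=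
    fun ζ' h => ft1_scaled_vanish θ (le_of_lt hR) hβ hvan s' h
  have hcs : HasCompactSupport (FT1 (fun t => (θ (β * (t - s')) : ℂ))) := by
    apply HasCompactSupport.intro (isCompact_Icc (a := -(β * R)) (b := β * R))
    intro x hx
    rw [Set.mem_Icc] at hx
    push_neg at hx
    apply hFTg_van
    by_cases h : -(β * R) ≤ x
    · have := hx h
      rw [le_abs]; left; linarith
    · push_neg at h
      rw [le_abs]; right; linarith
  have hFTg_int : Integrable (FT1 (fun t => (θ (β * (t - s')) : ℂ))) :=
    hFTg_cont.integrable_of_hasCompactSupport hcs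
  have hginv := ft1_inversion (fun t => (θ (β * (t - s')) : ℂ)) hgi hgc hFTg_int
  -- abbreviations
  set Fg : ℝ → ℂ := FT1 (fun t => (θ (β * (t - s')) : ℂ)) with hFg
  -- pointwise rewriting
  have hpt : ∀ t : ℝ, Complex.exp (-(Complex.I * (t * ζ : ℝ))) *
        ((θ (α * (t - s)) : ℂ) * (θ (β * (t - s')) : ℂ))
      = (((2 * Real.pi)⁻¹ : ℝ) : ℂ) *
          ∫ τ : ℝ, Complex.exp (-(Complex.I * (t * (ζ - τ) : ℝ))) *
            ((θ (α * (t - s)) : ℂ) * Fg τ) := by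
    intro t
    have hginv' : ((θ (β * (t - s')) : ℝ) : ℂ) = (((2 * Real.pi)⁻¹ : ℝ) : ℂ) *
        ∫ τ : ℝ, Complex.exp (Complex.I * (t * τ : ℝ)) * Fg τ := hginv t
    rw [hginv']
    have h1 : ∀ τ : ℝ, Complex.exp (-(Complex.I * (t * ζ : ℝ))) * (θ (α * (t - s)) : ℂ) *
          (Complex.exp (Complex.I * (t * τ : ℝ)) * Fg τ)
        = Complex.exp (-(Complex.I * (t * (ζ - τ) : ℝ))) * ((θ (α * (t - s)) : ℂ) * Fg τ) := by
      intro τ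
      rw [show Complex.exp (-(Complex.I * (t * ζ : ℝ))) * (θ (α * (t - s)) : ℂ) *
          (Complex.exp (Complex.I * (t * τ : ℝ)) * Fg τ)
        = Complex.exp (-(Complex.I * (t * ζ : ℝ))) * Complex.exp (Complex.I * (t * τ : ℝ)) *
          ((θ (α * (t - s)) : ℂ) * Fg τ) from by ring]
      rw [← Complex.exp_add]
      congr 2
      push_cast
      ring
    rw [show Complex.exp (-(Complex.I * (t * ζ : ℝ))) *
        ((θ (α * (t - s)) : ℂ) * ((((2 * Real.pi)⁻¹ : ℝ) : ℂ) *
          ∫ τ : ℝ, Complex.exp (Complex.I * (t * τ : ℝ)) * Fg τ))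
      = (((2 * Real.pi)⁻¹ : ℝ) : ℂ) * (Complex.exp (-(Complex.I * (t * ζ : ℝ))) *
          (θ (α * (t - s)) : ℂ) * ∫ τ : ℝ, Complex.exp (Complex.I * (t * τ : ℝ)) * Fg τ)
      from by ring]
    congr 1
    rw [← integral_const_mul]
    exact integral_congr_ae (Filter.Eventually.of_forall fun τ => h1 τ)
  rw [FT1]
  simp_rw [hpt]
  rw [integral_const_mul]
  have hK_int : Integrable (Function.uncurry fun (t τ : ℝ) =>
      Complex.exp (-(Complex.I * (t * (ζ - τ) : ℝ))) * ((θ (α * (t - s)) : ℂ) * Fg τ)) := by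
    have hbound : Integrable (fun p : ℝ × ℝ => ‖(θ (α * (p.1 - s)) : ℂ)‖ * ‖Fg p.2‖) :=
      (hfi.norm).mul_prod (hFTg_int.norm)
    apply hbound.mono'
    · apply Continuous.aestronglyMeasurable
      apply Continuous.mul
      · apply Complex.continuous_exp.comp
        apply Continuous.neg
        apply Continuous.mul continuous_const
        exact Complex.continuous_ofReal.comp (by fun_prop)
      · exact (hfc.comp continuous_fst).mul (hFTg_cont.comp continuous_snd)
    · refine Filter.Eventually.of_forall fun p => ?_
      rw [Function.uncurry]
      simp only [norm_mul]
      have : ‖Complex.exp (-(Complex.I * ((p.1 * (ζ - p.2) : ℝ) : ℂ)))‖ = 1 := by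
        rw [Complex.norm_exp]
        simp
      rw [this, one_mul]
  have hswap := integral_integral_swap hK_int
  rw [hswap]
  have hinner : ∀ τ : ℝ, (∫ t : ℝ, Complex.exp (-(Complex.I * (t * (ζ - τ) : ℝ))) *
        ((θ (α * (t - s)) : ℂ) * Fg τ))
      = FT1 (fun t => (θ (α * (t - s)) : ℂ)) (ζ - τ) * Fg τ := by
    intro τ
    rw [FT1, ← integral_mul_const]
    exact integral_congr_ae (Filter.Eventually.of_forall fun t => by ring)
  have hzero : ∀ τ : ℝ, FT1 (fun t => (θ (α * (t - s)) : ℂ)) (ζ - τ) * Fg τ = 0 := by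
    intro τ
    by_cases hτ : β * R ≤ |τ|
    · rw [hFTg_van τ hτ, mul_zero]
    · push_neg at hτ
      have h1 : α * R ≤ |ζ - τ| := by
        have := abs_sub_abs_le_abs_sub ζ τ
        nlinarith [hζ, hτ, abs_nonneg τ]
      rw [ft1_scaled_vanish θ (le_of_lt hR) hα hvan s h1, zero_mul]
  calc (((2 * Real.pi)⁻¹ : ℝ) : ℂ) * ∫ τ : ℝ, (∫ t : ℝ,
        Complex.exp (-(Complex.I * (t * (ζ - τ) : ℝ))) * ((θ (α * (t - s)) : ℂ) * Fg τ))
      = (((2 * Real.pi)⁻¹ : ℝ) : ℂ) * ∫ τ : ℝ, (0 : ℂ) := by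
        congr 1
        exact integral_congr_ae (Filter.Eventually.of_forall fun τ =>
          (hinner τ).trans (hzero τ))
    _ = 0 := by rw [integral_zero, mul_zero]

lemma ft1_mul_exp (F : ℝ → ℂ) (μ ζ : ℝ) :
    FT1 (fun t => Complex.exp ((μ * t : ℝ) * Complex.I) * F t) ζ = FT1 F (ζ - μ) := by
  rw [FT1, FT1]
  refine integral_congr_ae (Filter.Eventually.of_forall fun t => ?_)
  show cexp (-(I * ((t * ζ : ℝ) : ℂ))) * (cexp (((μ * t : ℝ) : ℂ) * I) * F t)
      = cexp (-(I * ((t * (ζ - μ) : ℝ) : ℂ))) * F t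
  rw [show cexp (-(I * ((t * ζ : ℝ) : ℂ))) * (cexp (((μ * t : ℝ) : ℂ) * I) * F t)
      = cexp (-(I * ((t * ζ : ℝ) : ℂ))) * cexp (((μ * t : ℝ) : ℂ) * I) * F t from by ring,
    ← Complex.exp_add,
    show -(I * ((t * ζ : ℝ) : ℂ)) + ((μ * t : ℝ) : ℂ) * I
      = -(I * ((t * (ζ - μ) : ℝ) : ℂ)) from by push_cast; ring]

lemma char_exp_mul_integrable (F : ℝ → ℂ) (hF : Integrable F) (hFc : Continuous F) (μ ζ : ℝ) :
    Integrable (fun t : ℝ => Complex.exp (-(Complex.I * (t * ζ : ℝ))) *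
      (Complex.exp ((μ * t : ℝ) * Complex.I) * F t)) := by
  refine (hF.norm).mono' ?_ ?_
  · apply Continuous.aestronglyMeasurable
    apply Continuous.mul
    · exact Complex.continuous_exp.comp (by fun_prop)
    · exact (Complex.continuous_exp.comp (by fun_prop)).mul hFc
  · refine Filter.Eventually.of_forall fun t => ?_
    simp only [norm_mul]
    rw [show ‖cexp (-(I * ((t * ζ : ℝ) : ℂ)))‖ = 1 from by
        rw [Complex.norm_exp]; simp,
      show ‖cexp (((μ * t : ℝ) : ℂ) * I)‖ = 1 from by
        rw [Complex.norm_exp]; simp]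
    simp

lemma ft1_sinsin_support {R : ℝ} (hR : 0 < R)
    (hvan : ∀ ζ : ℝ, R ≤ |ζ| → FT1 (fun x => (θ x : ℂ)) ζ = 0)
    (hcont : Continuous (FT1 (fun x => (θ x : ℂ))))
    {α β p q : ℝ} (hα : 0 < α) (hβ : 0 < β) (hq : 0 ≤ q) (hpq : q ≤ p) {ζ : ℝ}
    (hne : FT1 (fun t => ((θ (α * t) : ℂ) * (θ (β * t) : ℂ)) *
        ((Real.sin (p * t) * Real.sin (q * t) : ℝ) : ℂ)) ζ ≠ 0) :
    (p - q) - (α + β) * R ≤ |ζ| ∧ |ζ| ≤ (p + q) + (α + β) * R := by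
  set F : ℝ → ℂ := fun t => (θ (α * t) : ℂ) * (θ (β * t) : ℂ) with hFdef
  have hFint : Integrable F := by
    obtain ⟨C, hC⟩ := theta_bound θ
    refine Integrable.bdd_mul (c := C) ?_ ?_ (Filter.Eventually.of_forall fun x => hC _)
    · have := integrable_theta_scaled θ (ne_of_gt hβ) 0
      exact this.congr (Filter.Eventually.of_forall fun t => by
        show ((θ (β * (t - 0)) : ℝ) : ℂ) = ((θ (β * t) : ℝ) : ℂ); rw [sub_zero])
    · exact (Complex.continuous_ofReal.comp (θ.continuous.comp
        (continuous_const.mul continuous_id))).aestronglyMeasurable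
  have hFc : Continuous F := by
    apply Continuous.mul
    · exact Complex.continuous_ofReal.comp (θ.continuous.comp (by fun_prop))
    · exact Complex.continuous_ofReal.comp (θ.continuous.comp (by fun_prop))
  have hFvan : ∀ ζ' : ℝ, (α + β) * R < |ζ'| → FT1 F ζ' = 0 := by
    intro ζ' h
    have heq : F = fun t => (θ (α * (t - 0)) : ℂ) * (θ (β * (t - 0)) : ℂ) := by
      funext t; simp [hFdef]
    rw [heq]
    exact ft1_prod_support θ hR hvan hcont hα hβ 0 0 h
  -- decomposition of sin * sin
  have hdec : ∀ t : ℝ, ((Real.sin (p * t) * Real.sin (q * t) : ℝ) : ℂ)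
      = (cexp (((p - q) * t : ℝ) * I) + cexp (((-(p - q)) * t : ℝ) * I)
          - cexp (((p + q) * t : ℝ) * I) - cexp (((-(p + q)) * t : ℝ) * I)) / 4 := by
    intro t
    have h1 : ∀ x y : ℂ, cexp (x + y) = cexp x * cexp y := fun x y => Complex.exp_add x y
    push_cast
    rw [show ((p : ℂ) - q) * t * I = p * t * I + -(q * t * I) from by ring,
        show (-((p : ℂ) - q)) * t * I = -(p * t * I) + q * t * I from by ring,
        show ((p : ℂ) + q) * t * I = p * t * I + q * t * I from by ring,
        show (-((p : ℂ) + q)) * t * I = -(p * t * I) + -(q * t * I) from by ring,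
        h1, h1, h1, h1]
    rw [Complex.sin, Complex.sin]
    rw [show (-((p : ℂ) * t)) * I = -((p : ℂ) * t * I) from by ring,
        show (-((q : ℂ) * t)) * I = -((q : ℂ) * t * I) from by ring]
    simp only [Complex.exp_neg]
    have h2 := Complex.exp_ne_zero ((p : ℂ) * t * I)
    have h3 := Complex.exp_ne_zero ((q : ℂ) * t * I)
    field_simp
    ring_nf
    simp only [Complex.I_sq]
    ring
  -- linear decomposition of the Fourier integral
  have hcombo : FT1 (fun t => F t * ((Real.sin (p * t) * Real.sin (q * t) : ℝ) : ℂ)) ζ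
      = (FT1 F (ζ - (p - q)) + FT1 F (ζ - (-(p - q)))
          - FT1 F (ζ - (p + q)) - FT1 F (ζ - (-(p + q)))) / 4 := by
    rw [← ft1_mul_exp F (p - q) ζ, ← ft1_mul_exp F (-(p - q)) ζ,
        ← ft1_mul_exp F (p + q) ζ, ← ft1_mul_exp F (-(p + q)) ζ]
    rw [FT1, FT1, FT1, FT1, FT1]
    have i1 := char_exp_mul_integrable F hFint hFc (p - q) ζ
    have i2 := char_exp_mul_integrable F hFint hFc (-(p - q)) ζ
    have i3 := char_exp_mul_integrable F hFint hFc (p + q) ζ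
    have i4 := char_exp_mul_integrable F hFint hFc (-(p + q)) ζ
    rw [show (∫ x : ℝ, cexp (-(I * ((x * ζ : ℝ) : ℂ))) *
          (F x * ((Real.sin (p * x) * Real.sin (q * x) : ℝ) : ℂ)))
        = ∫ x : ℝ, (cexp (-(I * ((x * ζ : ℝ) : ℂ))) * (cexp (((p - q) * x : ℝ) * I) * F x)
            + cexp (-(I * ((x * ζ : ℝ) : ℂ))) * (cexp (((-(p - q)) * x : ℝ) * I) * F x)
            - cexp (-(I * ((x * ζ : ℝ) : ℂ))) * (cexp (((p + q) * x : ℝ) * I) * F x)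
            - cexp (-(I * ((x * ζ : ℝ) : ℂ))) * (cexp (((-(p + q)) * x : ℝ) * I) * F x)) / 4 from
      integral_congr_ae (Filter.Eventually.of_forall fun t => by
        show cexp (-(I * ((t * ζ : ℝ) : ℂ))) *
          (F t * ((Real.sin (p * t) * Real.sin (q * t) : ℝ) : ℂ)) = _
        rw [hdec t]; push_cast; ring)]
    have i12 : Integrable (fun x : ℝ => cexp (-(I * ((x * ζ : ℝ) : ℂ))) *
          (cexp (((p - q) * x : ℝ) * I) * F x)
        + cexp (-(I * ((x * ζ : ℝ) : ℂ))) * (cexp (((-(p - q)) * x : ℝ) * I) * F x)) :=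
      i1.add i2
    have i123 : Integrable (fun x : ℝ => cexp (-(I * ((x * ζ : ℝ) : ℂ))) *
          (cexp (((p - q) * x : ℝ) * I) * F x)
        + cexp (-(I * ((x * ζ : ℝ) : ℂ))) * (cexp (((-(p - q)) * x : ℝ) * I) * F x)
        - cexp (-(I * ((x * ζ : ℝ) : ℂ))) * (cexp (((p + q) * x : ℝ) * I) * F x)) :=
      i12.sub i3
    rw [integral_div, integral_sub i123 i4, integral_sub i12 i3, integral_add i1 i2]
  rw [hcombo] at hne
  have hr4 : FT1 F (ζ - (p - q)) ≠ 0 ∨ FT1 F (ζ - (-(p - q))) ≠ 0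
      ∨ FT1 F (ζ - (p + q)) ≠ 0 ∨ FT1 F (ζ - (-(p + q))) ≠ 0 := by
    by_contra h
    push_neg at h
    obtain ⟨h1, h2, h3, h4⟩ := h
    rw [h1, h2, h3, h4] at hne
    simp at hne
  have key : ∀ μ : ℝ, FT1 F (ζ - μ) ≠ 0 → |ζ - μ| ≤ (α + β) * R := by
    intro μ h
    by_contra h'
    push_neg at h'
    exact h (hFvan _ h')
  have habs : ∀ μ : ℝ, p - q ≤ |μ| → |μ| ≤ p + q → |ζ - μ| ≤ (α + β) * R →
      (p - q) - (α + β) * R ≤ |ζ| ∧ |ζ| ≤ (p + q) + (α + β) * R := by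
    intro μ h1 h2 h3
    constructor
    · have := abs_sub_abs_le_abs_sub μ ζ
      rw [abs_sub_comm] at this
      linarith
    · have := abs_sub_abs_le_abs_sub ζ μ
      linarith
  have e1 : |p - q| = p - q := abs_of_nonneg (by linarith)
  have e2 : |(-(p - q))| = p - q := by rw [abs_neg]; exact e1
  have e3 : |p + q| = p + q := abs_of_nonneg (by linarith)
  have e4 : |(-(p + q))| = p + q := by rw [abs_neg]; exact e3
  rcases hr4 with h | h | h | h
  · exact habs _ (by rw [e1]) (by rw [e1]; linarith) (key _ h)
  · exact habs _ (by rw [e2]) (by rw [e2]; linarith) (key _ h)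
  · exact habs _ (by rw [e3]; linarith) (by rw [e3]) (key _ h)
  · exact habs _ (by rw [e4]; linarith) (by rw [e4]) (key _ h)

lemma FT_eq_prod_FT1 {d : ℕ} (g : Fin d → ℝ → ℂ) (ξ : EuclideanSpace ℝ (Fin d)) :
    FT d (fun x => ∏ i, g i (x i)) ξ = ∏ i, FT1 (g i) (ξ i) := by
  rw [FT]
  have h1 : ∀ x : EuclideanSpace ℝ (Fin d),
      Complex.exp (-(Complex.I * ((inner ℝ x ξ : ℝ) : ℂ))) * ∏ i, g i (x i)
      = ∏ i, (Complex.exp (-(Complex.I * ((x i * ξ i : ℝ) : ℂ))) * g i (x i)) := by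
    intro x
    rw [Finset.prod_mul_distrib]
    congr 1
    rw [show ((inner ℝ x ξ : ℝ) : ℂ) = ∑ i, ((x i * ξ i : ℝ) : ℂ) from by
      rw [show (inner ℝ x ξ : ℝ) = ∑ i, x i * ξ i from by rw [PiLp.inner_apply]; simp only [RCLike.inner_apply', conj_trivial]]
      push_cast; rfl]
    rw [Finset.mul_sum, ← Finset.sum_neg_distrib, Complex.exp_sum]
  simp_rw [h1]
  rw [← ((EuclideanSpace.volume_preserving_symm_measurableEquiv_toLp (Fin d)).symm).integral_comp'
    (fun x => ∏ i, (Complex.exp (-(Complex.I * ((x i * ξ i : ℝ) : ℂ))) * g i (x i)))]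
  exact integral_fintype_prod_eq_prod (ι := Fin d)
    (fun i t => Complex.exp (-(Complex.I * ((t * ξ i : ℝ) : ℂ))) * g i t)

end AuxLemmas

set_option maxHeartbeats 1000000 in
/-- For `j < k` in `N(n)`, the support of `𝓕Φ_{k,j}` with
`Φ_{k,j}(x) = φ(2^k A(x - 2^{2n+k}e)) φ(2^j A(x - 2^{2n+j}e))` lies in the annulus
`{(33/48)·2^k ≤ |ξ| ≤ (35/48)·2^k}`. -/
theorem stmt8 (d : ℕ) (hd : 4 ≤ d) (ε : ℝ) (hε : ε ∈ Set.Ioo (0 : ℝ) 1)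
    (θ : SchwartzMap ℝ ℝ)
    (hθsm : ContDiff ℝ (⊤ : ℕ∞) fun ξ : ℝ => FT1 (fun x => (θ x : ℂ)) ξ)
    (hθ01 : ∀ ξ : ℝ, (FT1 (fun x => (θ x : ℂ)) ξ).im = 0 ∧
      (FT1 (fun x => (θ x : ℂ)) ξ).re ∈ Set.Icc (0 : ℝ) 1)
    (hθ1 : ∀ ξ : ℝ, |ξ| ≤ 1 / (200 * d) → FT1 (fun x => (θ x : ℂ)) ξ = 1)
    (hθ0 : ∀ ξ : ℝ, 1 / (100 * d) ≤ |ξ| → FT1 (fun x => (θ x : ℂ)) ξ = 0)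
    (n : ℕ) (hn : 0 < n) (h16 : 16 ∣ n) (j k : ℕ) (hj : j ∈ Nset n) (hk : k ∈ Nset n)
    (hjk : j < k) :
    Function.support (FT d fun x =>
        ((phi d (fun t => θ t) ((2 : ℝ) ^ k • Amap d ε (x - (2 : ℝ) ^ (2 * n + k) • evec d)) *
          phi d (fun t => θ t) ((2 : ℝ) ^ j • Amap d ε (x - (2 : ℝ) ^ (2 * n + j) • evec d)) :
            ℝ) : ℂ)) ⊆
      {ξ : EuclideanSpace ℝ (Fin d) |
        33 / 48 * 2 ^ k ≤ ‖ξ‖ ∧ ‖ξ‖ ≤ 35 / 48 * 2 ^ k} := by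
  intro ξ hξ
  have hd1 : d - 1 < d := by omega
  have hd2 : ¬(d - 1 < 2) := by omega
  set i0 : Fin d := ⟨d - 1, hd1⟩ with hi0
  have hεpos : (0:ℝ) < ε := hε.1
  have hεlt : ε < 1 := hε.2
  -- Nset facts
  have hjmem := hj
  have hkmem := hk
  rw [Nset, Finset.mem_filter] at hjmem hkmem
  have hj8 : 8 ∣ j := hjmem.2.2.1
  have hk8 : 8 ∣ k := hkmem.2.2.1
  have hjk8 : j + 8 ≤ k := by
    have h8 : 8 ∣ (k - j) := Nat.dvd_sub hk8 hj8
    have h0 : 0 < k - j := by omega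
    have := Nat.le_of_dvd h0 h8
    omega
  have hT : 0 < (2:ℝ)^k := by positivity
  have hu : 0 < (2:ℝ)^j := by positivity
  have h256 : 256 * (2:ℝ)^j ≤ (2:ℝ)^k := by
    have h : (2:ℝ)^(j+8) ≤ (2:ℝ)^k := pow_le_pow_right₀ (by norm_num) hjk8
    rw [pow_add] at h
    linarith [h]
  have hD4 : (4:ℝ) ≤ (d:ℝ) := by exact_mod_cast hd
  have hD0 : (0:ℝ) < (d:ℝ) := by linarith
  set R : ℝ := 1 / (100 * (d:ℝ)) with hRdef
  have hR : 0 < R := by positivity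
  have hRle : R ≤ 1/400 := by
    rw [hRdef]
    rw [div_le_div_iff₀ (by positivity) (by norm_num)]
    linarith
  have hvan : ∀ ζ : ℝ, R ≤ |ζ| → FT1 (fun x => (θ x : ℂ)) ζ = 0 := fun ζ h => hθ0 ζ h
  have hcont : Continuous (FT1 (fun x => (θ x : ℂ))) := hθsm.continuous
  -- the coordinate data
  set a : Fin d → ℝ := fun i => if (i : ℕ) < 2 then ε else 1 with hadef
  set S : ℕ → Fin d → ℝ :=
    fun m i => if (i : ℕ) < 2 then 2^(2*n+m) * (Real.sqrt 2 / 2) else 0 with hSdef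
  have ha_pos : ∀ i, 0 < a i := by
    intro i; rw [hadef]; dsimp only; split
    · exact hεpos
    · norm_num
  have ha_le : ∀ i, a i ≤ 1 := by
    intro i; rw [hadef]; dsimp only; split
    · linarith
    · norm_num
  set g : Fin d → ℝ → ℂ := fun i t =>
    ((θ ((2^k * a i) * (t - S k i)) : ℂ) * (θ ((2^j * a i) * (t - S j i)) : ℂ)) *
      (if i = i0 then
        ((Real.sin ((17/24 * 2^k) * t) * Real.sin ((17/24 * 2^j) * t) : ℝ) : ℂ) else 1)
    with hgdef
  -- coordinates of the rescaled points
  have hcoordy : ∀ (m : ℕ) (x : EuclideanSpace ℝ (Fin d)) (i : Fin d),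
      ((2 : ℝ) ^ m • Amap d ε (x - (2 : ℝ) ^ (2 * n + m) • evec d)) i
        = ((2:ℝ)^m * a i) * (x i - S m i) := by
    intro m x i
    simp only [Amap, evec, PiLp.smul_apply, PiLp.sub_apply, smul_eq_mul, PiLp.toLp_apply]
    rw [hadef, hSdef]
    dsimp only
    by_cases hi : (i : ℕ) < 2
    · simp only [if_pos hi]; ring
    · simp only [if_neg hi]; ring
  have hcoord0 : ∀ (m : ℕ) (x : EuclideanSpace ℝ (Fin d)),
      coord d (d-1) ((2 : ℝ) ^ m • Amap d ε (x - (2 : ℝ) ^ (2 * n + m) • evec d))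
        = (2:ℝ)^m * x i0 := by
    intro m x
    rw [coord, dif_pos hd1]
    rw [show (⟨d-1, hd1⟩ : Fin d) = i0 from rfl]
    rw [hcoordy m x i0]
    have h1 : a i0 = 1 := by rw [hadef]; simp [hi0, hd2]
    have h2 : S m i0 = 0 := by rw [hSdef]; simp [hi0, hd2]
    rw [h1, h2]
    ring
  -- factorization
  have hfac : ∀ x : EuclideanSpace ℝ (Fin d),
      ((phi d (fun t => θ t) ((2 : ℝ) ^ k • Amap d ε (x - (2 : ℝ) ^ (2 * n + k) • evec d)) *
        phi d (fun t => θ t) ((2 : ℝ) ^ j • Amap d ε (x - (2 : ℝ) ^ (2 * n + j) • evec d)) :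
          ℝ) : ℂ) = ∏ i, g i (x i) := by
    intro x
    rw [phi, phi]
    rw [hgdef]
    dsimp only
    rw [Finset.prod_mul_distrib, Finset.prod_mul_distrib, Finset.prod_ite_eq' Finset.univ i0
      (fun i => ((Real.sin ((17/24 * 2^k) * (x i)) * Real.sin ((17/24 * 2^j) * (x i)) : ℝ) : ℂ))]
    simp only [Finset.mem_univ, if_true]
    have hk' : ∀ i : Fin d, θ (((2 : ℝ) ^ k • Amap d ε (x - (2 : ℝ) ^ (2 * n + k) • evec d)) i)
        = θ ((2^k * a i) * (x i - S k i)) := fun i => by rw [hcoordy k x i]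
    have hj' : ∀ i : Fin d, θ (((2 : ℝ) ^ j • Amap d ε (x - (2 : ℝ) ^ (2 * n + j) • evec d)) i)
        = θ ((2^j * a i) * (x i - S j i)) := fun i => by rw [hcoordy j x i]
    rw [Finset.prod_congr rfl (fun i _ => hk' i), Finset.prod_congr rfl (fun i _ => hj' i)]
    rw [hcoord0 k x, hcoord0 j x]
    push_cast
    rw [show (17 / 24 * ((2:ℂ) ^ k * ((x i0 : ℝ) : ℂ)))
          = (17 / 24 * (2:ℂ) ^ k * ((x i0 : ℝ) : ℂ)) from by ring,
        show (17 / 24 * ((2:ℂ) ^ j * ((x i0 : ℝ) : ℂ)))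
          = (17 / 24 * (2:ℂ) ^ j * ((x i0 : ℝ) : ℂ)) from by ring]
    ring
  -- rewrite the support hypothesis
  have hne0 : FT d (fun x => ∏ i, g i (x i)) ξ ≠ 0 := by
    have h := hξ
    rw [Function.mem_support] at h
    rwa [show (fun x => ((phi d (fun t => θ t)
        ((2 : ℝ) ^ k • Amap d ε (x - (2 : ℝ) ^ (2 * n + k) • evec d)) *
      phi d (fun t => θ t) ((2 : ℝ) ^ j • Amap d ε (x - (2 : ℝ) ^ (2 * n + j) • evec d)) :
        ℝ) : ℂ)) = fun x => ∏ i, g i (x i) from funext hfac] at h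
  rw [FT_eq_prod_FT1] at hne0
  have hne : ∀ i : Fin d, FT1 (g i) (ξ i) ≠ 0 := by
    intro i hzero
    exact hne0 (Finset.prod_eq_zero (Finset.mem_univ i) hzero)
  set r0 : ℝ := ((2:ℝ)^k + (2:ℝ)^j) * R with hr0def
  have hr0pos : 0 < r0 := by positivity
  have hother : ∀ i : Fin d, i ≠ i0 → |ξ i| ≤ r0 := by
    intro i hi
    have hgi : g i = fun t => (θ ((2^k * a i) * (t - S k i)) : ℂ) *
        (θ ((2^j * a i) * (t - S j i)) : ℂ) := by
      funext t; rw [hgdef]; dsimp only; rw [if_neg hi, mul_one]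
    by_contra hgt
    push_neg at hgt
    apply hne i
    rw [hgi]
    apply ft1_prod_support θ hR hvan hcont
      (by have := ha_pos i; positivity) (by have := ha_pos i; positivity) (S k i) (S j i)
    have h1 : ((2:ℝ)^k * a i + (2:ℝ)^j * a i) * R ≤ r0 := by
      rw [hr0def]
      apply mul_le_mul_of_nonneg_right _ (le_of_lt hR)
      have h2 := ha_le i
      have h3 := ha_pos i
      nlinarith [hT, hu]
    linarith
  have hi0bound : ((17/24 * (2:ℝ)^k) - (17/24 * (2:ℝ)^j)) - ((2:ℝ)^k + (2:ℝ)^j) * R ≤ |ξ i0| ∧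
      |ξ i0| ≤ ((17/24 * (2:ℝ)^k) + (17/24 * (2:ℝ)^j)) + ((2:ℝ)^k + (2:ℝ)^j) * R := by
    have hgi : g i0 = fun t => (((θ (((2:ℝ)^k) * t) : ℂ)) * ((θ (((2:ℝ)^j) * t) : ℂ))) *
        ((Real.sin ((17/24 * 2^k) * t) * Real.sin ((17/24 * 2^j) * t) : ℝ) : ℂ) := by
      funext t
      rw [hgdef]; dsimp only
      rw [if_pos rfl]
      have h1 : a i0 = 1 := by rw [hadef]; simp [hi0, hd2]
      have h2 : S k i0 = 0 := by rw [hSdef]; simp [hi0, hd2]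
      have h3 : S j i0 = 0 := by rw [hSdef]; simp [hi0, hd2]
      simp only [h1, h2, h3, mul_one, sub_zero]
    have hq1 : (0:ℝ) ≤ 17/24 * (2:ℝ)^j := by positivity
    have hq2 : (17:ℝ)/24 * (2:ℝ)^j ≤ 17/24 * (2:ℝ)^k := by nlinarith [hu]
    have h := ft1_sinsin_support θ hR hvan hcont (α := (2:ℝ)^k) (β := (2:ℝ)^j)
      (p := 17/24 * 2^k) (q := 17/24 * 2^j) hT hu hq1 hq2
      (by rw [← hgi]; exact hne i0)
    exact h
  -- norm bounds
  have h1 : |ξ i0| ≤ ‖ξ‖ := by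
    rw [EuclideanSpace.norm_eq, ← Real.sqrt_sq_eq_abs]
    apply Real.sqrt_le_sqrt
    have h2 := Finset.single_le_sum (f := fun i => ‖ξ i‖^2)
      (fun i _ => sq_nonneg _) (Finset.mem_univ i0)
    simpa [Real.norm_eq_abs, sq_abs] using h2
  have hTuR : ((2:ℝ)^k + (2:ℝ)^j) * R ≤ ((2:ℝ)^k + (2:ℝ)^j) / 400 := by
    have := mul_le_mul_of_nonneg_left hRle (by positivity : (0:ℝ) ≤ (2:ℝ)^k + (2:ℝ)^j)
    linarith [this]
  constructor
  · -- lower bound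
    have h2 := hi0bound.1
    have : (33:ℝ)/48 * 2^k ≤ |ξ i0| := by linarith
    linarith [h1]
  · -- upper bound
    have hr0le : r0 ≤ ((2:ℝ)^k + (2:ℝ)^j) / 400 := by rw [hr0def]; exact hTuR
    have hsum : ∑ i, ‖ξ i‖^2 ≤ (35/48 * (2:ℝ)^k)^2 := by
      have hsplit := Finset.sum_erase_add Finset.univ (fun i => ‖ξ i‖^2) (Finset.mem_univ i0)
      simp only at hsplit
      have hcard : (Finset.univ.erase i0).card = d - 1 := by
        rw [Finset.card_erase_of_mem (Finset.mem_univ i0), Finset.card_univ, Fintype.card_fin]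
      have herase : ∑ i ∈ Finset.univ.erase i0, ‖ξ i‖^2 ≤ ((d:ℝ) - 1) * r0^2 := by
        have hle := Finset.sum_le_card_nsmul (Finset.univ.erase i0) (fun i => ‖ξ i‖^2) (r0^2)
          (fun i hi => by
            have hii : i ≠ i0 := Finset.ne_of_mem_erase hi
            have h3 := hother i hii
            show ‖ξ i‖^2 ≤ r0^2
            rw [Real.norm_eq_abs]
            exact pow_le_pow_left₀ (abs_nonneg _) h3 2)
        rw [hcard] at hle
        have hcast : ((d - 1 : ℕ) : ℝ) = (d:ℝ) - 1 := by
          rw [Nat.cast_sub (by omega)]; norm_num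
        calc ∑ i ∈ Finset.univ.erase i0, ‖ξ i‖^2 ≤ (d-1) • (r0^2) := hle
          _ = ((d - 1 : ℕ) : ℝ) * r0^2 := by rw [nsmul_eq_mul]
          _ = ((d:ℝ) - 1) * r0^2 := by rw [hcast]
      have hdr : ((d:ℝ) - 1) * r0^2 ≤ ((2:ℝ)^k + (2:ℝ)^j)^2 / 40000 := by
        have hr0eq : r0 = ((2:ℝ)^k + (2:ℝ)^j) / (100 * (d:ℝ)) := by
          rw [hr0def, hRdef]; ring
        rw [hr0eq, div_pow, mul_div_assoc']
        rw [div_le_div_iff₀ (by positivity) (by norm_num)]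
        nlinarith [sq_nonneg (((d:ℝ) - 2) * ((2:ℝ)^k + (2:ℝ)^j)), sq_nonneg ((2:ℝ)^k + (2:ℝ)^j)]
      have hi0sq : ‖ξ i0‖^2 ≤ (853/1200)^2 * ((2:ℝ)^k + (2:ℝ)^j)^2 := by
        have hb : |ξ i0| ≤ 853/1200 * ((2:ℝ)^k + (2:ℝ)^j) := by
          have h4 := hi0bound.2
          linarith [hTuR]
        rw [Real.norm_eq_abs]
        nlinarith [abs_nonneg (ξ i0), hb]
      have hAB2 : ((2:ℝ)^k + (2:ℝ)^j)^2 ≤ (257/256)^2 * ((2:ℝ)^k)^2 := by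
        nlinarith [h256, hu, hT]
      nlinarith [hsplit, herase, hdr, hi0sq, hAB2, sq_nonneg ((2:ℝ)^k)]
    rw [EuclideanSpace.norm_eq]
    have h5 := Real.sqrt_le_sqrt hsum
    rwa [Real.sqrt_sq (by positivity)] at h5
end
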